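/- arXiv:1603.03483 — 5 statements merged into one kernel-verified Lean document; each statement's English description precedes it below -/
import Mathlib

section
/- For an irreducible Markov chain on a finite state space and pairwise distinct states y, y₁, y₂, one has P_y(τ_{y₁} < τ_{y₂}) = P_y(τ_{y₁} < τ_{{y₂,y}}) / P_y(τ_{{y₁,y₂}} < τ_y), where τ denotes first hitting times (with the convention that the hitting time of the starting point is the first return time). -/
open MeasureTheory Filter

/-- First hitting time of `A` in positive time (the first return time when the chain starts
in `A`): `inf {t ≥ 1 : ω t ∈ A}`. -/
noncomputable def retTime {X : Type*} (A : Set X) (ω : ℕ → X) : ℕ :=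
  sInf {t : ℕ | 0 < t ∧ ω t ∈ A}

/-!
For `G ⊆ F`, the probability `q x` that the first visit of the chain to `F` at a positive time
lies in `G` solves the first-step equation `q x = ∑ z, p x z * (if z ∈ F then 𝟙_G z else q z)`,
by the Markov property at time `1`. For nonempty `F` this equation has at most one solution with
given data on `F`: by the maximum principle, irreducibility drives a maximiser of `|q|` into `F`.

Take `F = {y, y₁, y₂}`. The function `h x = P_x(τ_{y₁} < τ_{y₂})` solves the equation on this `F`
with data `𝟙_{y₁}` on `{y₁, y₂}` and `h y` at `y`, hence `h = b + h y • r` with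
`b x = P_x(τ_{y₁} < τ_{y₂, y})` and `r x = P_x(τ_y < τ_{y₁, y₂})`. Likewise `d + r = 1` for
`d x = P_x(τ_{y₁, y₂} < τ_y)`, and `d y ≠ 0`, since otherwise `d` would solve the equation on
`{y₁, y₂}` with data `1`. Evaluating at `y` gives `h y * d y = b y`.

Comparisons of return times agree with first-entry events outside the null event that some
nonempty set is never visited.
-/

namespace MarkovChain

theorem ext_of_map_frestrictLe {X : ℕ → Type*} [∀ n, MeasurableSpace (X n)]
    {μ ν : Measure (Π n, X n)} [IsFiniteMeasure μ]
    (h : ∀ n, μ.map (Preorder.frestrictLe n) = ν.map (Preorder.frestrictLe n)) : μ = ν := by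
  have hproj := ProbabilityTheory.isProjectiveMeasureFamily_map_restrict (P := μ)
    (X := fun n ω ↦ ω n) fun n ↦ (measurable_pi_apply n).aemeasurable
  have hμ : IsProjectiveLimit μ fun I ↦ μ.map fun ω ↦ I.restrict fun n ↦ ω n := fun _ ↦ rfl
  exact hμ.unique ((isProjectiveLimit_nat_iff hproj ν).2 fun n ↦ (h n).symm)

theorem ext_of_forall_cylinder {X : Type*} [MeasurableSpace X] [Countable X]
    [MeasurableSingletonClass X] {μ ν : Measure (ℕ → X)} [IsFiniteMeasure μ]
    (h : ∀ (n : ℕ) (f : ℕ → X),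
      μ {ω | ∀ i ≤ n, ω i = f i} = ν {ω | ∀ i ≤ n, ω i = f i}) : μ = ν := by
  refine ext_of_map_frestrictLe fun n ↦ Measure.ext_of_singleton fun g ↦ ?_
  let f : ℕ → X := fun i ↦ if hi : i ≤ n then g ⟨i, Finset.mem_Iic.2 hi⟩
    else g ⟨0, Finset.mem_Iic.2 n.zero_le⟩
  have hg : Preorder.frestrictLe (π := fun _ ↦ X) n ⁻¹' {g} = {ω | ∀ i ≤ n, ω i = f i} := by
    ext ω
    simp only [Set.mem_preimage, Set.mem_singleton_iff, funext_iff, Subtype.forall,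
      Finset.mem_Iic, Preorder.frestrictLe_apply]
    exact forall₂_congr fun i hi ↦ by simp [f, hi]
  rw [Measure.map_apply (Preorder.measurable_frestrictLe n) (measurableSet_singleton g),
    Measure.map_apply (Preorder.measurable_frestrictLe n) (measurableSet_singleton g), hg, h]

section Harmonic

variable {X : Type*} [Fintype X] {p : Matrix X X ℝ}

lemma mem_of_pow_apply_ne_zero [DecidableEq X] {S : Set X}
    (hS : ∀ a ∈ S, ∀ b, p a b ≠ 0 → b ∈ S) {a : X} (ha : a ∈ S) :
    ∀ {n : ℕ} {b : X}, (p ^ n) a b ≠ 0 → b ∈ S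
  | 0, b, h => by
    obtain rfl : a = b := by_contra fun hab ↦ h (Matrix.one_apply_ne hab)
    exact ha
  | n + 1, b, h => by
    rw [pow_succ, Matrix.mul_apply] at h
    obtain ⟨c, -, hc⟩ := Finset.exists_ne_zero_of_sum_ne_zero h
    exact hS c (mem_of_pow_apply_ne_zero hS ha (left_ne_zero_of_mul hc)) b
      (right_ne_zero_of_mul hc)

variable (p) in
open scoped Classical in
/-- First-step equation for the probability of an event decided at the first visit to `F` at a
positive time, `g z` being its value when that visit is to `z`. -/
def FirstStepEq (F : Set X) (g q : X → ℝ) : Prop :=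
  ∀ x, q x = ∑ z, p x z * if z ∈ F then g z else q z

variable {F : Set X} {g g' q q' : X → ℝ}

lemma FirstStepEq.congr (hq : FirstStepEq p F g q) (hg : ∀ z ∈ F, g z = g' z) :
    FirstStepEq p F g' q := by
  intro x
  rw [hq x]
  refine Finset.sum_congr rfl fun z _ ↦ ?_
  split_ifs with hz
  · rw [hg z hz]
  · rfl

lemma FirstStepEq.add (hq : FirstStepEq p F g q) (hq' : FirstStepEq p F g' q') :
    FirstStepEq p F (g + g') (q + q') := by
  intro x
  rw [Pi.add_apply, hq x, hq' x, ← Finset.sum_add_distrib]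
  refine Finset.sum_congr rfl fun z _ ↦ ?_
  split_ifs <;> simp [mul_add]

lemma FirstStepEq.const_smul (c : ℝ) (hq : FirstStepEq p F g q) :
    FirstStepEq p F (c • g) (c • q) := by
  intro x
  rw [Pi.smul_apply, hq x, smul_eq_mul, Finset.mul_sum]
  refine Finset.sum_congr rfl fun z _ ↦ ?_
  split_ifs <;> simp <;> ring

lemma firstStepEq_one (hrow : ∀ a, ∑ b, p a b = 1) : FirstStepEq p F 1 1 := by
  intro x
  simp [hrow x]

lemma firstStepEq_insert_iff {a : X} (ha : g a = q a) :
    FirstStepEq p (insert a F) g q ↔ FirstStepEq p F g q := by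
  refine forall_congr' fun x ↦ Eq.congr_right (Finset.sum_congr rfl fun z _ ↦ ?_)
  by_cases hza : z = a
  · subst hza
    rw [if_pos (Set.mem_insert _ _)]
    split_ifs <;> rw [ha]
  · by_cases hz : z ∈ F
    · rw [if_pos (Set.mem_insert_of_mem _ hz), if_pos hz]
    · rw [if_neg (by simp [hza, hz]), if_neg hz]

lemma FirstStepEq.notMem_and_abs_eq (hnn : ∀ a b, 0 ≤ p a b) (hrow : ∀ a, ∑ b, p a b = 1)
    (hq : FirstStepEq p F 0 q) {x z : X} (hmax : ∀ z, |q z| ≤ |q x|) (hpos : 0 < |q x|)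
    (hz : p x z ≠ 0) : z ∉ F ∧ |q z| = |q x| := by
  classical
  set M := |q x| with hM
  set w : X → ℝ := fun z ↦ if z ∈ F then 0 else q z
  have hw : ∀ z, |w z| ≤ M := fun z ↦ by
    by_cases hz : z ∈ F <;> simp [w, hz, hpos.le, hmax z]
  have hterm : ∀ z, 0 ≤ p x z * (M - |w z|) := fun z ↦
    mul_nonneg (hnn x z) (sub_nonneg.2 (hw z))
  have hsum : ∑ z, p x z * (M - |w z|) = 0 := by
    refine le_antisymm ?_ (Finset.sum_nonneg fun z _ ↦ hterm z)
    have : M ≤ ∑ z, p x z * |w z| :=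
      calc M = |∑ z, p x z * w z| := by rw [hM, hq x]; simp [w]
        _ ≤ ∑ z, |p x z * w z| := Finset.abs_sum_le_sum_abs _ _
        _ = ∑ z, p x z * |w z| := by simp [abs_mul, abs_of_nonneg (hnn x _)]
    simp only [mul_sub, Finset.sum_sub_distrib, ← Finset.sum_mul, hrow x]
    linarith
  have hwz : |w z| = M := by
    have := (Finset.sum_eq_zero_iff_of_nonneg fun z _ ↦ hterm z).1 hsum z (Finset.mem_univ z)
    linarith [(mul_eq_zero.1 this).resolve_left hz]
  by_cases hzF : z ∈ F
  · simp [w, hzF] at hwz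
    linarith
  · simpa [w, hzF] using hwz

/-- Maximum principle: if `q ≠ 0`, every step from a maximiser of `|q|` lands off `F` at another
maximiser, which irreducibility rules out. -/
theorem FirstStepEq.eq_zero [DecidableEq X] (hnn : ∀ a b, 0 ≤ p a b)
    (hrow : ∀ a, ∑ b, p a b = 1) (hirr : ∀ a b, ∃ n : ℕ, 0 < (p ^ n) a b) (hF : F.Nonempty)
    (hq : FirstStepEq p F 0 q) : q = 0 := by
  obtain ⟨f, hf⟩ := hF
  have : Nonempty X := ⟨f⟩
  obtain ⟨x₀, hx₀⟩ := Finite.exists_max fun x ↦ |q x|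
  by_contra hq0
  have hpos : 0 < |q x₀| := lt_of_le_of_ne (abs_nonneg _) fun h ↦
    hq0 (funext fun x ↦ by simpa [← h] using hx₀ x)
  have hclosed : ∀ a ∈ {z | z ∉ F ∧ |q z| = |q x₀|}, ∀ b, p a b ≠ 0 →
      b ∈ {z | z ∉ F ∧ |q z| = |q x₀|} := fun a ha b hab ↦
    (hq.notMem_and_abs_eq hnn hrow (ha.2 ▸ hx₀) (ha.2 ▸ hpos) hab).imp_right (·.trans ha.2)
  obtain ⟨z₀, -, hz₀⟩ := Finset.exists_ne_zero_of_sum_ne_zero (hrow x₀ ▸ one_ne_zero)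
  obtain ⟨n, hn⟩ := hirr z₀ f
  exact (mem_of_pow_apply_ne_zero hclosed (hq.notMem_and_abs_eq hnn hrow hx₀ hpos hz₀)
    hn.ne').1 hf

theorem FirstStepEq.unique [DecidableEq X] (hnn : ∀ a b, 0 ≤ p a b)
    (hrow : ∀ a, ∑ b, p a b = 1) (hirr : ∀ a b, ∃ n : ℕ, 0 < (p ^ n) a b) (hF : F.Nonempty)
    (hq : FirstStepEq p F g q) (hq' : FirstStepEq p F g q') : q = q' := by
  refine sub_eq_zero.1 (FirstStepEq.eq_zero hnn hrow hirr hF fun x ↦ ?_)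
  rw [Pi.sub_apply, hq x, hq' x, ← Finset.sum_sub_distrib]
  refine Finset.sum_congr rfl fun z _ ↦ ?_
  split_ifs <;> simp [mul_sub]

theorem firstStepEq_renewal [DecidableEq X] (hnn : ∀ a b, 0 ≤ p a b)
    (hrow : ∀ a, ∑ b, p a b = 1) (hirr : ∀ a b, ∃ n : ℕ, 0 < (p ^ n) a b) {y y₁ y₂ : X}
    (h1 : y ≠ y₁) (h2 : y ≠ y₂) (h12 : y₁ ≠ y₂) {h b d r : X → ℝ}
    (hh : FirstStepEq p {y₁, y₂} (({y₁} : Set X).indicator 1) h)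
    (hb : FirstStepEq p {y, y₁, y₂} (({y₁} : Set X).indicator 1) b)
    (hd : FirstStepEq p {y, y₁, y₂} (({y₁, y₂} : Set X).indicator 1) d)
    (hr : FirstStepEq p {y, y₁, y₂} (({y} : Set X).indicator 1) r) :
    h y = b y / d y := by
  have hren : h = b + h y • r :=
    ((firstStepEq_insert_iff (by simp [h1])).2 (hh.congr (by
      rintro z (rfl | rfl) <;> simp [h1.symm, h2.symm]))).unique hnn hrow hirr
        (Set.insert_nonempty _ _) (hb.add (hr.const_smul (h y)))
  have hsum : d + r = 1 :=
    (hd.add hr).unique hnn hrow hirr (Set.insert_nonempty _ _)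
      ((firstStepEq_one hrow).congr (by rintro z (rfl | rfl | rfl) <;> simp [h1, h2, h12]))
  have hdy : d y ≠ 0 := fun h0 ↦ by
    have : d = 1 := ((firstStepEq_insert_iff (by simp [h0, h1, h2])).1 hd).unique hnn hrow hirr
      (Set.insert_nonempty _ _) ((firstStepEq_one hrow).congr (by rintro z (rfl | rfl) <;> simp))
    simp [this] at h0
  rw [eq_div_iff hdy]
  have e1 := congrFun hren y
  have e2 := congrFun hsum y
  simp only [Pi.add_apply, Pi.smul_apply, smul_eq_mul, Pi.one_apply] at e1 e2
  linear_combination e1 + h y * e2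

end Harmonic

section Events

variable {X : Type*}

def avoids (F : Set X) : Set (ℕ → X) := {ω | ∀ n, 0 < n → ω n ∉ F}

def firstEntryIn (F G : Set X) : Set (ℕ → X) :=
  {ω | ∃ n, 0 < n ∧ ω n ∈ G ∧ ∀ i, 0 < i → i < n → ω i ∉ F}

variable {F G A B : Set X} {ω : ℕ → X}

lemma mem_avoids_iff_shift : ω ∈ avoids F ↔ ω 1 ∉ F ∧ (fun n ↦ ω (n + 1)) ∈ avoids F := by
  refine ⟨fun h ↦ ⟨h 1 one_pos, fun n _ ↦ h (n + 1) n.succ_pos⟩, ?_⟩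
  rintro ⟨h1, h⟩ (_ | _ | n) hn
  · exact absurd hn (lt_irrefl 0)
  · exact h1
  · exact h (n + 1) n.succ_pos

lemma mem_firstEntryIn_iff_shift :
    ω ∈ firstEntryIn F G ↔ ω 1 ∈ G ∨ (ω 1 ∉ F ∧ (fun n ↦ ω (n + 1)) ∈ firstEntryIn F G) := by
  constructor
  · rintro ⟨n, hn, hG, hF⟩
    rcases Nat.lt_or_ge 1 n with h1 | h1
    · refine Or.inr ⟨hF 1 one_pos h1, n - 1, by omega, by simpa [Nat.sub_add_cancel hn] using hG,
        fun i _ hin ↦ hF (i + 1) i.succ_pos (by omega)⟩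
    · obtain rfl : n = 1 := by omega
      exact Or.inl hG
  · rintro (h1 | ⟨h1, n, hn, hG, hF⟩)
    · exact ⟨1, one_pos, h1, fun i hi hi1 ↦ absurd hi1 (by omega)⟩
    · refine ⟨n + 1, n.succ_pos, hG, fun i hi hin ↦ ?_⟩
      obtain ⟨j, rfl⟩ : ∃ j, i = j + 1 := ⟨i - 1, by omega⟩
      rcases Nat.eq_zero_or_pos j with rfl | hj
      · exact h1
      · exact hF j hj (by omega)

lemma retTime_spec (h : ω ∉ avoids A) : 0 < retTime A ω ∧ ω (retTime A ω) ∈ A := by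
  simp only [avoids, Set.mem_ofPred_eq, not_forall, not_not] at h
  obtain ⟨n, hn, hA⟩ := h
  exact Nat.sInf_mem (s := {t | 0 < t ∧ ω t ∈ A}) ⟨n, hn, hA⟩

lemma retTime_le {n : ℕ} (hn : 0 < n) (hA : ω n ∈ A) : retTime A ω ≤ n :=
  Nat.sInf_le ⟨hn, hA⟩

lemma notMem_of_lt_retTime {n : ℕ} (hn : 0 < n) (h : n < retTime A ω) : ω n ∉ A :=
  fun hA ↦ Nat.notMem_of_lt_sInf h ⟨hn, hA⟩

lemma retTime_lt_retTime_iff (hAB : Disjoint A B) (hA : ω ∉ avoids A) (hB : ω ∉ avoids B) :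
    retTime A ω < retTime B ω ↔ ω ∈ firstEntryIn (A ∪ B) A := by
  obtain ⟨hA0, hAmem⟩ := retTime_spec hA
  obtain ⟨hB0, hBmem⟩ := retTime_spec hB
  constructor
  · intro hlt
    refine ⟨retTime A ω, hA0, hAmem, fun i hi hiA ↦ ?_⟩
    rintro (h | h)
    · exact notMem_of_lt_retTime hi hiA h
    · exact notMem_of_lt_retTime hi (hiA.trans hlt) h
  · rintro ⟨n, hn, hnA, hbefore⟩
    refine (retTime_le hn hnA).trans_lt (lt_of_not_ge fun h ↦ ?_)
    rcases h.lt_or_eq with h | h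
    · exact hbefore _ hB0 h (Or.inr hBmem)
    · exact Set.disjoint_left.1 hAB hnA (h ▸ hBmem)

end Events

lemma preimage_update_swap {X : Type*} [MeasurableSpace X] [DecidableEq X] {a b : X}
    (hab : ∀ S, MeasurableSet S → (a ∈ S ↔ b ∈ S)) (k : ℕ) {T : Set (ℕ → X)}
    (hT : MeasurableSet T) :
    (fun ω ↦ Function.update ω k (Equiv.swap a b (ω k))) ⁻¹' T = T := by
  set Φ : (ℕ → X) → ℕ → X := fun ω ↦ Function.update ω k (Equiv.swap a b (ω k))
  have hswap : ∀ S, MeasurableSet S → Equiv.swap a b ⁻¹' S = S := fun S hS ↦ by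
    ext c
    rcases eq_or_ne c a with rfl | hca
    · simp [hab S hS]
    rcases eq_or_ne c b with rfl | hcb
    · simp [hab S hS]
    · simp [Equiv.swap_apply_of_ne_of_ne hca hcb]
  have : MeasurableSpace.pi ≤ MeasurableSpace.invariants Φ := by
    refine iSup_le fun i ↦ MeasurableSpace.comap_le_iff_le_map.2 fun S hS ↦
      ⟨measurable_pi_apply i hS, ?_⟩
    rcases eq_or_ne i k with rfl | hik
    · ext ω
      simpa [Φ] using Set.ext_iff.1 (hswap S hS) (ω i)
    · ext ω
      simp [Φ, hik]
  exact (this T hT).2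

def IsChainLaw {X : Type*} [MeasurableSpace X] (p : Matrix X X ℝ) (P : X → Measure (ℕ → X)) :
    Prop :=
  ∀ (x : X) (n : ℕ) (f : ℕ → X), f 0 = x →
    P x {ω | ∀ i ≤ n, ω i = f i} = ∏ i ∈ Finset.range n, ENNReal.ofReal (p (f i) (f (i+1)))

namespace IsChainLaw

variable {X : Type*} [MeasurableSpace X] {p : Matrix X X ℝ} {P : X → Measure (ℕ → X)}

lemma measure_head (hP : IsChainLaw p P) (x : X) : P x {ω | ω 0 = x} = 1 := by
  simpa using hP x 0 (fun _ ↦ x) rfl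

variable [Fintype X]

/-- If no measurable set separates `a` from `b`, the measurable hull of the cylinder
`{ω 0 = d, ω 1 = a}` contains `{ω 0 = d, ω 1 = b}`, so covering `{ω 0 = d}` by the cylinders
`{ω 0 = d, ω 1 = z}` loses the mass `p d b`. -/
lemma apply_eq_zero_of_inseparable (hP : IsChainLaw p P) (hnn : ∀ a b, 0 ≤ p a b) (hrow : ∀ a, ∑ b, p a b = 1) {a b : X} (hab : a ≠ b)
    (hsep : ∀ S, MeasurableSet S → (a ∈ S ↔ b ∈ S)) (d : X) : p d b = 0 := by
  classical
  let C : X → Set (ℕ → X) := fun z ↦ {ω | ∀ i ≤ 1, ω i = if i = 0 then d else z}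
  have hC : ∀ z, P d (C z) = ENNReal.ofReal (p d z) := fun z ↦ by
    simpa using hP d 1 (fun i ↦ if i = 0 then d else z) rfl
  have hCb : C b ⊆ toMeasurable (P d) (C a) := by
    intro ω hω
    rw [← preimage_update_swap hsep 1 (measurableSet_toMeasurable _ _)]
    refine subset_toMeasurable _ _ fun i hi ↦ ?_
    interval_cases i <;> simp_all [C]
  set s := (Finset.univ.erase a).erase b
  have hcover : {ω | ω 0 = d} ⊆ toMeasurable (P d) (C a) ∪ ⋃ z ∈ s, C z := by
    intro ω hω
    have hmem : ω ∈ C (ω 1) := fun i hi ↦ by interval_cases i <;> simp_all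
    by_cases h1a : ω 1 = a
    · exact Or.inl (subset_toMeasurable _ _ (h1a ▸ hmem))
    by_cases h1b : ω 1 = b
    · exact Or.inl (hCb (h1b ▸ hmem))
    · exact Or.inr (Set.mem_biUnion (by simp [s, h1a, h1b]) hmem)
  have hle : 1 ≤ p d a + ∑ z ∈ s, p d z := by
    rw [← ENNReal.one_le_ofReal, ENNReal.ofReal_add (hnn d a)
      (Finset.sum_nonneg fun z _ ↦ hnn d z), ENNReal.ofReal_sum_of_nonneg fun z _ ↦ hnn d z]
    calc 1 = P d {ω | ω 0 = d} := (hP.measure_head d).symm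
      _ ≤ P d (toMeasurable (P d) (C a) ∪ ⋃ z ∈ s, C z) := measure_mono hcover
      _ ≤ P d (toMeasurable (P d) (C a)) + ∑ z ∈ s, P d (C z) :=
        (measure_union_le _ _).trans (add_le_add_right (measure_biUnion_finset_le _ _) _)
      _ = _ := by simp only [measure_toMeasurable, hC]
  have hsum : ∑ z, p d z = p d a + (p d b + ∑ z ∈ s, p d z) := by
    rw [← Finset.add_sum_erase _ _ (Finset.mem_univ a),
      ← Finset.add_sum_erase _ _ (Finset.mem_erase.2 ⟨hab.symm, Finset.mem_univ b⟩)]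
  linarith [hnn d b, hrow d]

/-- The σ-algebra on `X` is arbitrary; the cylinder probabilities force it to separate points. -/
theorem measurableSingletonClass [DecidableEq X] (hP : IsChainLaw p P) (hnn : ∀ a b, 0 ≤ p a b) (hrow : ∀ a, ∑ b, p a b = 1)
    (hirr : ∀ a b : X, ∃ n : ℕ, 0 < (p ^ n) a b) : MeasurableSingletonClass X := by
  refine ⟨fun a ↦ ?_⟩
  have hsep : ∀ b, b ≠ a → ∃ U, MeasurableSet U ∧ a ∈ U ∧ b ∉ U := by
    intro b hba
    by_contra! h
    have hcol := hP.apply_eq_zero_of_inseparable hnn hrow hba.symm fun S hS ↦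
      ⟨h S hS, fun hb ↦ by_contra fun ha ↦ h Sᶜ hS.compl ha hb⟩
    obtain ⟨n, hn⟩ := hirr a b
    exact mem_of_pow_apply_ne_zero (S := {b}ᶜ) (fun c _ e he heb ↦ he (heb ▸ hcol c))
      hba.symm hn.ne' rfl
  choose! U hU haU hbU using hsep
  have hUa : {a} = ⋂ b, ⋂ (_ : b ≠ a), U b := by
    ext x
    simp only [Set.mem_singleton_iff, Set.mem_iInter]
    exact ⟨fun hx b _ ↦ hx ▸ haU b ‹_›, fun hx ↦ by_contra fun hxa ↦ hbU x hxa (hx x hxa)⟩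
  rw [hUa]
  exact MeasurableSet.iInter fun b ↦ MeasurableSet.iInter fun hb ↦ hU b hb

variable [MeasurableSingletonClass X] [∀ x, IsProbabilityMeasure (P x)]

lemma ae_head (hP : IsChainLaw p P) (x : X) : ∀ᵐ ω ∂P x, ω 0 = x := by
  have hm : MeasurableSet {ω : ℕ → X | ω 0 = x} :=
    measurableSet_eq_fun (measurable_pi_apply 0) measurable_const
  rw [ae_iff_measure_eq hm.nullMeasurableSet, hP.measure_head, measure_univ]

lemma measure_congr_of_head (hP : IsChainLaw p P) {x : X} {A B : Set (ℕ → X)}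
    (h : ∀ ω, ω 0 = x → (ω ∈ A ↔ ω ∈ B)) : P x A = P x B :=
  measure_congr <| (hP.ae_head x).mono fun ω hω ↦ propext (h ω hω)

theorem map_shift (hP : IsChainLaw p P) (x : X) :
    (P x).map (fun ω n ↦ ω (n + 1)) = ∑ z, ENNReal.ofReal (p x z) • P z := by
  refine ext_of_forall_cylinder fun n f ↦ ?_
  have hcyl : MeasurableSet {ω : ℕ → X | ∀ i ≤ n, ω i = f i} := by
    simp only [Set.ofPred_forall]
    exact MeasurableSet.iInter fun i ↦ MeasurableSet.iInter fun _ ↦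
      measurable_pi_apply i (measurableSet_singleton _)
  rw [Measure.map_apply (by fun_prop) hcyl, Measure.coe_finsetSum, Finset.sum_apply,
    Finset.sum_eq_single (f 0)]
  · let g : ℕ → X := fun i ↦ if i = 0 then x else f (i - 1)
    rw [Measure.smul_apply, smul_eq_mul, hP (f 0) n f rfl,
      hP.measure_congr_of_head (B := {ω | ∀ i ≤ n + 1, ω i = g i}) fun ω hω ↦ ?_,
      hP x (n + 1) g rfl, Finset.prod_range_succ', mul_comm]
    · simp [g]
    · constructor
      · intro h i hi
        cases i with
        | zero => simp [g, hω]
        | succ i => simpa [g] using h i (by omega)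
      · intro h i hi
        simpa [g] using h (i + 1) (by omega)
  · intro z _ hz
    rw [Measure.smul_apply, hP.measure_congr_of_head (B := ∅) fun ω hω ↦ ?_, measure_empty,
      smul_zero]
    simp only [Set.mem_ofPred_eq, Set.mem_empty_iff_false, iff_false]
    exact fun h ↦ hz (hω ▸ h 0 n.zero_le)
  · simp

lemma measure_preimage_shift (hP : IsChainLaw p P) (x : X) {A : Set (ℕ → X)}
    (hA : MeasurableSet A) :
    P x ((fun ω n ↦ ω (n + 1)) ⁻¹' A) = ∑ z, ENNReal.ofReal (p x z) * P z A := by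
  rw [← Measure.map_apply (by fun_prop) hA, hP.map_shift, Measure.coe_finsetSum,
    Finset.sum_apply]
  rfl

theorem firstStepEq_of_mem_iff (hP : IsChainLaw p P) (hnn : ∀ a b, 0 ≤ p a b) {F G : Set X}
    (hGF : G ⊆ F) {E : Set (ℕ → X)} (hE : MeasurableSet E)
    (hstep : ∀ ω, ω ∈ E ↔ ω 1 ∈ G ∨ (ω 1 ∉ F ∧ (fun n ↦ ω (n + 1)) ∈ E)) :
    FirstStepEq p F (G.indicator 1) fun x ↦ (P x E).toReal := by
  classical
  have hE' : MeasurableSet {ω : ℕ → X | ω 0 ∈ G ∨ (ω 0 ∉ F ∧ ω ∈ E)} :=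
    measurableSet_setOfPred.2 (by fun_prop)
  intro x
  have hpre : P x E = P x ((fun ω n ↦ ω (n + 1)) ⁻¹' {ω | ω 0 ∈ G ∨ (ω 0 ∉ F ∧ ω ∈ E)}) :=
    congrArg (P x) (Set.ext hstep)
  show (P x E).toReal = ∑ z, p x z * if z ∈ F then G.indicator 1 z else (P z E).toReal
  rw [hpre, hP.measure_preimage_shift x hE', ENNReal.toReal_sum fun z _ ↦
    ENNReal.mul_ne_top ENNReal.ofReal_ne_top (measure_ne_top _ _)]
  refine Finset.sum_congr rfl fun z _ ↦ ?_
  rw [ENNReal.toReal_mul, ENNReal.toReal_ofReal (hnn x z),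
    hP.measure_congr_of_head (B := {ω | z ∈ G ∨ (z ∉ F ∧ ω ∈ E)}) fun ω hω ↦ by simp [hω]]
  by_cases hzG : z ∈ G
  · simp [hzG, hGF hzG]
  · by_cases hzF : z ∈ F <;> simp [hzG, hzF]

theorem firstStepEq_firstEntryIn (hP : IsChainLaw p P) (hnn : ∀ a b, 0 ≤ p a b) {F G : Set X}
    (hGF : G ⊆ F) : FirstStepEq p F (G.indicator 1) fun x ↦ (P x (firstEntryIn F G)).toReal :=
  hP.firstStepEq_of_mem_iff hnn hGF (measurableSet_setOfPred.2 (by fun_prop))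
    fun _ ↦ mem_firstEntryIn_iff_shift

variable [DecidableEq X]

theorem measure_avoids (hP : IsChainLaw p P) (hnn : ∀ a b, 0 ≤ p a b)
    (hrow : ∀ a, ∑ b, p a b = 1) (hirr : ∀ a b : X, ∃ n : ℕ, 0 < (p ^ n) a b) {F : Set X}
    (hF : F.Nonempty) (x : X) : P x (avoids F) = 0 := by
  have h := hP.firstStepEq_of_mem_iff (E := avoids F) hnn (Set.empty_subset F)
    (measurableSet_setOfPred.2 (by fun_prop)) fun ω ↦ by simpa using mem_avoids_iff_shift (ω := ω)
  rw [Set.indicator_empty] at h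
  simpa [ENNReal.toReal_eq_zero_iff, measure_ne_top] using
    congrFun (h.eq_zero hnn hrow hirr hF) x

theorem measure_retTime_lt (hP : IsChainLaw p P) (hnn : ∀ a b, 0 ≤ p a b)
    (hrow : ∀ a, ∑ b, p a b = 1) (hirr : ∀ a b : X, ∃ n : ℕ, 0 < (p ^ n) a b) {A B : Set X}
    (hA : A.Nonempty) (hB : B.Nonempty) (hAB : Disjoint A B) (x : X) :
    P x {ω | retTime A ω < retTime B ω} = P x (firstEntryIn (A ∪ B) A) := by
  have hnA := measure_eq_zero_iff_ae_notMem.1 (hP.measure_avoids hnn hrow hirr hA x)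
  have hnB := measure_eq_zero_iff_ae_notMem.1 (hP.measure_avoids hnn hrow hirr hB x)
  exact measure_congr ((hnA.and hnB).mono fun ω h ↦
    propext (retTime_lt_retTime_iff hAB h.1 h.2))

end IsChainLaw

end MarkovChain

open MarkovChain in
/-- For an irreducible Markov chain on a finite state space and pairwise
distinct states `y, y₁, y₂`:
`P_y(τ_{y₁} < τ_{y₂}) = P_y(τ_{y₁} < τ_{{y₂,y}}) / P_y(τ_{{y₁,y₂}} < τ_y)`,
hitting times of the starting point being first return times. -/
theorem stmt3 {X : Type*} [Fintype X] [DecidableEq X] [MeasurableSpace X]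
    (p : Matrix X X ℝ)
    (hnn : ∀ a b, 0 ≤ p a b) (hrow : ∀ a, ∑ b, p a b = 1)
    (hirr : ∀ a b : X, ∃ n : ℕ, 0 < (p ^ n) a b)
    (P : X → Measure (ℕ → X)) (hprob : ∀ x, IsProbabilityMeasure (P x))
    (hP : ∀ (x : X) (n : ℕ) (f : ℕ → X), f 0 = x →
      P x {ω | ∀ i ≤ n, ω i = f i}
        = ∏ i ∈ Finset.range n, ENNReal.ofReal (p (f i) (f (i+1))))
    (y y₁ y₂ : X) (h1 : y ≠ y₁) (h2 : y ≠ y₂) (h12 : y₁ ≠ y₂) :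
    (P y {ω | retTime {y₁} ω < retTime {y₂} ω}).toReal
      = (P y {ω | retTime {y₁} ω < retTime {y₂, y} ω}).toReal
        / (P y {ω | retTime {y₁, y₂} ω < retTime {y} ω}).toReal := by
  replace hP : IsChainLaw p P := hP
  have := hprob
  have := hP.measurableSingletonClass hnn hrow hirr
  have hF0 : ({y, y₁, y₂} : Set X) = {y₁} ∪ {y₂, y} := by ext; simp; tauto
  have hF0' : ({y, y₁, y₂} : Set X) = {y₁, y₂} ∪ {y} := Set.union_singleton.symm
  rw [hP.measure_retTime_lt hnn hrow hirr (Set.singleton_nonempty _) (Set.singleton_nonempty _)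
      (Set.disjoint_singleton.2 h12),
    hP.measure_retTime_lt hnn hrow hirr (Set.singleton_nonempty _) (Set.insert_nonempty _ _)
      (Set.disjoint_singleton_left.2 (by simp [h12, h1.symm])),
    hP.measure_retTime_lt hnn hrow hirr (Set.insert_nonempty _ _) (Set.singleton_nonempty _)
      (Set.disjoint_singleton_right.2 (by simp [h1, h2])),
    Set.singleton_union, ← hF0, ← hF0']
  exact firstStepEq_renewal hnn hrow hirr h1 h2 h12
    (hP.firstStepEq_firstEntryIn hnn (by simp)) (hP.firstStepEq_firstEntryIn hnn (by simp))
    (hP.firstStepEq_firstEntryIn hnn (Set.subset_insert _ _))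
    (hP.firstStepEq_firstEntryIn hnn (by simp))
end

section
/- In a reversible energy landscape with unique ground state x₀ and metastable set {x₁, x₂} each with stability level Γ_m (the maximal stability level), for any state x with x ≠ x₁ and H(x) ≤ H(x₁) one has Φ(x,x₁) - H(x₁) ≥ Γ_m. -/
/-- The communication height `Φ(y,z)` of the energy landscape `(X,Q,H,Δ)`. -/
noncomputable def commHeight {X : Type*} (Q : X → X → Prop) (H : X → ℝ) (Δ : X → X → ℝ)
    (y z : X) : ℝ :=
  sInf {c : ℝ | ∃ (n : ℕ) (ω : Fin (n+1) → X), ω 0 = y ∧ ω (Fin.last n) = z ∧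
      (∀ i : Fin n, Q (ω i.castSucc) (ω i.succ)) ∧
      c = ⨆ i : Fin n, (H (ω i.castSucc) + Δ (ω i.castSucc) (ω i.succ))}

/-- The stability level `V_x = Φ(x, I_x) - H(x)` where `I_x = {y : H(y) < H(x)}`. -/
noncomputable def stabLevel {X : Type*} (Q : X → X → Prop) (H : X → ℝ) (Δ : X → X → ℝ)
    (x : X) : ℝ :=
  sInf {c : ℝ | ∃ y, H y < H x ∧ c = commHeight Q H Δ x y} - H x

namespace Stmt6Aux

lemma iSup_rev {n : ℕ} (f : Fin n → ℝ) : (⨆ i : Fin n, f i.rev) = ⨆ i : Fin n, f i := by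
  rcases Nat.eq_zero_or_pos n with h | h
  · subst h
    rw [Real.iSup_of_isEmpty, Real.iSup_of_isEmpty]
  · haveI : Nonempty (Fin n) := ⟨⟨0, h⟩⟩
    apply le_antisymm
    · exact ciSup_le fun i => le_ciSup (Set.Finite.bddAbove (Set.finite_range f)) i.rev
    · refine ciSup_le fun i => ?_
      have := le_ciSup (Set.Finite.bddAbove (Set.finite_range (fun j : Fin n => f j.rev))) i.rev
      simpa using this

lemma iSup_eq_max {n : ℕ} (hn : 0 < n) (f : Fin n → ℝ) :
    ∃ i, (⨆ j, f j) = f i := by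
  haveI : Nonempty (Fin n) := ⟨⟨0, hn⟩⟩
  obtain ⟨i, hi⟩ := Finite.exists_max f
  exact ⟨i, le_antisymm (ciSup_le hi) (le_ciSup (Set.Finite.bddAbove (Set.finite_range f)) i)⟩

lemma le_iSup_fin {n : ℕ} (f : Fin n → ℝ) (i : Fin n) : f i ≤ ⨆ j, f j :=
  le_ciSup (Set.Finite.bddAbove (Set.finite_range f)) i

variable {X : Type*} [Finite X] (Q : X → X → Prop) (H : X → ℝ) (Δ : X → X → ℝ)

/-- The set of elevations of paths from `y` to `z`. -/
def pathSet (y z : X) : Set ℝ :=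
  {c : ℝ | ∃ (n : ℕ) (ω : Fin (n+1) → X), ω 0 = y ∧ ω (Fin.last n) = z ∧
      (∀ i : Fin n, Q (ω i.castSucc) (ω i.succ)) ∧
      c = ⨆ i : Fin n, (H (ω i.castSucc) + Δ (ω i.castSucc) (ω i.succ))}

lemma commHeight_def (y z : X) : commHeight Q H Δ y z = sInf (pathSet Q H Δ y z) := rfl

lemma pathSet_subset (y z : X) :
    pathSet Q H Δ y z ⊆ insert 0 (Set.range (fun p : X × X => H p.1 + Δ p.1 p.2)) := by
  rintro c ⟨n, ω, -, -, -, rfl⟩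
  rcases Nat.eq_zero_or_pos n with h | h
  · subst h
    exact Or.inl (Real.iSup_of_isEmpty _)
  · obtain ⟨i, hi⟩ := iSup_eq_max h _
    exact Or.inr ⟨(ω i.castSucc, ω i.succ), hi.symm⟩

lemma pathSet_finite (y z : X) : (pathSet Q H Δ y z).Finite :=
  Set.Finite.subset (Set.Finite.insert 0 (Set.finite_range _)) (pathSet_subset Q H Δ y z)

lemma pathSet_nonempty
    (hconn : ∀ y z : X, ∃ (n : ℕ) (ω : Fin (n+1) → X), ω 0 = y ∧ ω (Fin.last n) = z ∧
      ∀ i : Fin n, Q (ω i.castSucc) (ω i.succ)) (y z : X) :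
    (pathSet Q H Δ y z).Nonempty := by
  obtain ⟨n, ω, h0, hl, hq⟩ := hconn y z
  exact ⟨_, n, ω, h0, hl, hq, rfl⟩

lemma commHeight_mem
    (hconn : ∀ y z : X, ∃ (n : ℕ) (ω : Fin (n+1) → X), ω 0 = y ∧ ω (Fin.last n) = z ∧
      ∀ i : Fin n, Q (ω i.castSucc) (ω i.succ)) (y z : X) :
    commHeight Q H Δ y z ∈ pathSet Q H Δ y z :=
  Set.Nonempty.csInf_mem (pathSet_nonempty Q H Δ hconn y z) (pathSet_finite Q H Δ y z)

lemma commHeight_le {y z : X} {c : ℝ} (hc : c ∈ pathSet Q H Δ y z) :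
    commHeight Q H Δ y z ≤ c :=
  csInf_le (Set.Finite.bddBelow (pathSet_finite Q H Δ y z)) hc

/-- Reversing a path: `pathSet` is symmetric. -/
lemma pathSet_subset_symm (hQsymm : ∀ x y, Q x y → Q y x)
    (hrev : ∀ x y, Q x y → H x + Δ x y = Δ y x + H y) (y z : X) :
    pathSet Q H Δ y z ⊆ pathSet Q H Δ z y := by
  rintro c ⟨n, ω, h0, hl, hq, rfl⟩
  refine ⟨n, fun i => ω i.rev, by simp [Fin.rev_zero, hl], by simp [Fin.rev_last, h0], ?_, ?_⟩
  · intro i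
    show Q (ω i.castSucc.rev) (ω i.succ.rev)
    rw [Fin.rev_castSucc, Fin.rev_succ]
    exact hQsymm _ _ (hq i.rev)
  · have key : ∀ j : Fin n, H (ω j.succ) + Δ (ω j.succ) (ω j.castSucc)
        = H (ω j.castSucc) + Δ (ω j.castSucc) (ω j.succ) := by
      intro j
      have := hrev _ _ (hq j)
      linarith [this]
    show (⨆ i : Fin n, (H (ω i.castSucc) + Δ (ω i.castSucc) (ω i.succ)))
        = ⨆ i : Fin n, (H (ω i.castSucc.rev) + Δ (ω i.castSucc.rev) (ω i.succ.rev))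
    symm
    calc (⨆ i : Fin n, (H (ω (i.castSucc).rev) + Δ (ω (i.castSucc).rev) (ω (i.succ).rev)))
        = ⨆ i : Fin n, (H (ω i.rev.succ) + Δ (ω i.rev.succ) (ω i.rev.castSucc)) := by
          congr 1; funext i; rw [Fin.rev_castSucc, Fin.rev_succ]
      _ = ⨆ i : Fin n, (H (ω i.succ) + Δ (ω i.succ) (ω i.castSucc)) :=
          iSup_rev (fun j => H (ω j.succ) + Δ (ω j.succ) (ω j.castSucc))
      _ = ⨆ i : Fin n, (H (ω i.castSucc) + Δ (ω i.castSucc) (ω i.succ)) := by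
          congr 1; funext j; exact key j

lemma commHeight_symm (hQsymm : ∀ x y, Q x y → Q y x)
    (hrev : ∀ x y, Q x y → H x + Δ x y = Δ y x + H y) (y z : X) :
    commHeight Q H Δ y z = commHeight Q H Δ z y := by
  rw [commHeight_def, commHeight_def]
  congr 1
  exact Set.Subset.antisymm (pathSet_subset_symm Q H Δ hQsymm hrev y z)
    (pathSet_subset_symm Q H Δ hQsymm hrev z y)

/-- Concatenation of paths: triangle inequality for membership. -/
lemma pathSet_concat {a b c : X} {c₁ c₂ : ℝ}
    (h₁ : c₁ ∈ pathSet Q H Δ a b) (h₂ : c₂ ∈ pathSet Q H Δ b c) :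
    ∃ c₃ ∈ pathSet Q H Δ a c, c₃ ≤ max c₁ c₂ := by
  obtain ⟨n, ω, hω0, hωl, hωq, rfl⟩ := h₁
  obtain ⟨m, σ, hσ0, hσl, hσq, rfl⟩ := h₂
  set τ : Fin (n + m + 1) → X := fun i =>
    if h : (i : ℕ) ≤ n then ω ⟨i, Nat.lt_succ_of_le h⟩
    else σ ⟨(i : ℕ) - n, by have := i.isLt; omega⟩ with hτ
  have hglue : ω (Fin.last n) = σ 0 := by rw [hωl, hσ0]
  have hτlow : ∀ (i : Fin (n + m + 1)) (hi : (i : ℕ) ≤ n), τ i = ω ⟨i, by omega⟩ := by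
    intro i hi; simp [hτ, hi]
  have hτhigh : ∀ (i : Fin (n + m + 1)) (hi : n ≤ (i : ℕ)), τ i = σ ⟨(i : ℕ) - n, by have := i.isLt; omega⟩ := by
    intro i hi
    by_cases h : (i : ℕ) ≤ n
    · have : (i : ℕ) = n := le_antisymm h hi
      rw [hτlow i h]
      have h1 : (⟨(i : ℕ), by omega⟩ : Fin (n+1)) = Fin.last n := by
        ext; simp [this]
      have h2 : (⟨(i : ℕ) - n, by omega⟩ : Fin (m+1)) = 0 := by
        ext; simp [this]
      rw [h1, h2, hglue]
    · simp [hτ, h]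
  have h0 : τ 0 = a := by
    have := hτlow 0 (by simp)
    rw [this, ← hω0]
    congr 1
  have hl : τ (Fin.last (n + m)) = c := by
    have := hτhigh (Fin.last (n + m)) (by simp)
    rw [this, ← hσl]
    congr 1
    ext
    simp
  refine ⟨_, ⟨n + m, τ, h0, hl, ?_, rfl⟩, ?_⟩
  · intro i
    by_cases h : (i : ℕ) < n
    · have hc : τ i.castSucc = ω (⟨(i : ℕ), h⟩ : Fin n).castSucc := by
        rw [hτlow i.castSucc (by simp only [Fin.coe_castSucc]; omega)]
        first | rfl | (congr 1; ext; simp; done) | (congr 1; ext; simp; omega)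
      have hs : τ i.succ = ω (⟨(i : ℕ), h⟩ : Fin n).succ := by
        rw [hτlow i.succ (by simp only [Fin.val_succ]; omega)]
        first | rfl | (congr 1; ext; simp; done) | (congr 1; ext; simp; omega)
      rw [hc, hs]; exact hωq _
    · push_neg at h
      have hi2 : (i : ℕ) < n + m := i.isLt
      have hc : τ i.castSucc = σ (⟨(i : ℕ) - n, by omega⟩ : Fin m).castSucc := by
        rw [hτhigh i.castSucc (by simp only [Fin.coe_castSucc]; omega)]
        first | rfl | (congr 1; ext; simp; done) | (congr 1; ext; simp; omega)
      have hs : τ i.succ = σ (⟨(i : ℕ) - n, by omega⟩ : Fin m).succ := by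
        rw [hτhigh i.succ (by simp only [Fin.val_succ]; omega)]
        first | rfl | (congr 1; ext; simp; done) | (congr 1; ext; simp; omega)
      rw [hc, hs]; exact hσq _
  · rcases Nat.eq_zero_or_pos (n + m) with hnm | hnm
    · have hn0 : n = 0 := by omega
      have hm0 : m = 0 := by omega
      subst hn0; subst hm0
      simp only [Real.iSup_of_isEmpty]
      simp
    · haveI : Nonempty (Fin (n + m)) := ⟨⟨0, hnm⟩⟩
      refine ciSup_le fun i => ?_
      by_cases h : (i : ℕ) < n
      · have hc : τ i.castSucc = ω (⟨(i : ℕ), h⟩ : Fin n).castSucc := by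
          rw [hτlow i.castSucc (by simp only [Fin.coe_castSucc]; omega)]
          first | rfl | (congr 1; ext; simp; done) | (congr 1; ext; simp; omega)
        have hs : τ i.succ = ω (⟨(i : ℕ), h⟩ : Fin n).succ := by
          rw [hτlow i.succ (by simp only [Fin.val_succ]; omega)]
          first | rfl | (congr 1; ext; simp; done) | (congr 1; ext; simp; omega)
        rw [hc, hs]
        exact le_max_of_le_left (le_iSup_fin (fun j : Fin n => H (ω j.castSucc) + Δ (ω j.castSucc) (ω j.succ)) ⟨(i : ℕ), h⟩)
      · push_neg at h
        have hi2 : (i : ℕ) < n + m := i.isLt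
        have hc : τ i.castSucc = σ (⟨(i : ℕ) - n, by omega⟩ : Fin m).castSucc := by
          rw [hτhigh i.castSucc (by simp only [Fin.coe_castSucc]; omega)]
          first | rfl | (congr 1; ext; simp; done) | (congr 1; ext; simp; omega)
        have hs : τ i.succ = σ (⟨(i : ℕ) - n, by omega⟩ : Fin m).succ := by
          rw [hτhigh i.succ (by simp only [Fin.val_succ]; omega)]
          first | rfl | (congr 1; ext; simp; done) | (congr 1; ext; simp; omega)
        rw [hc, hs]
        exact le_max_of_le_right (le_iSup_fin (fun j : Fin m => H (σ j.castSucc) + Δ (σ j.castSucc) (σ j.succ)) ⟨(i : ℕ) - n, by omega⟩)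

lemma commHeight_triangle
    (hconn : ∀ y z : X, ∃ (n : ℕ) (ω : Fin (n+1) → X), ω 0 = y ∧ ω (Fin.last n) = z ∧
      ∀ i : Fin n, Q (ω i.castSucc) (ω i.succ)) (a b c : X) :
    commHeight Q H Δ a c ≤ max (commHeight Q H Δ a b) (commHeight Q H Δ b c) := by
  obtain ⟨c₃, hc₃, hle⟩ := pathSet_concat Q H Δ
    (commHeight_mem Q H Δ hconn a b) (commHeight_mem Q H Δ hconn b c)
  exact le_trans (commHeight_le Q H Δ hc₃) hle

/-- The set over which the stability level infimum is taken. -/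
def stabSet (x : X) : Set ℝ := {c : ℝ | ∃ y, H y < H x ∧ c = commHeight Q H Δ x y}

lemma stabSet_finite (x : X) : (stabSet Q H Δ x).Finite := by
  have : stabSet Q H Δ x ⊆ Set.range (commHeight Q H Δ x) := by
    rintro c ⟨y, -, rfl⟩; exact ⟨y, rfl⟩
  exact Set.Finite.subset (Set.finite_range _) this

lemma stabLevel_le {x y : X} (h : H y < H x) :
    stabLevel Q H Δ x ≤ commHeight Q H Δ x y - H x :=
  sub_le_sub_right (csInf_le (Set.Finite.bddBelow (stabSet_finite Q H Δ x)) ⟨y, h, rfl⟩) _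

lemma stabLevel_attained {x : X} (hne : (stabSet Q H Δ x).Nonempty) :
    ∃ y, H y < H x ∧ commHeight Q H Δ x y = stabLevel Q H Δ x + H x := by
  obtain ⟨y, hy, hc⟩ := Set.Nonempty.csInf_mem hne (stabSet_finite Q H Δ x)
  have hdef : stabLevel Q H Δ x = sInf (stabSet Q H Δ x) - H x := rfl
  exact ⟨y, hy, by rw [← hc, hdef]; ring⟩

end Stmt6Aux

/-- In a reversible energy landscape with unique ground state `x₀` and
metastable set `{x₁, x₂}`, each with stability level `Γ_m` (the maximal stability level),
for any `x ≠ x₁` with `H(x) ≤ H(x₁)` one has `Φ(x,x₁) - H(x₁) ≥ Γ_m`. -/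
theorem stmt6 {X : Type*} [Finite X] (Q : X → X → Prop) (H : X → ℝ) (Δ : X → X → ℝ)
    (hQsymm : ∀ x y, Q x y → Q y x)
    (hconn : ∀ y z : X, ∃ (n : ℕ) (ω : Fin (n+1) → X), ω 0 = y ∧ ω (Fin.last n) = z ∧
      ∀ i : Fin n, Q (ω i.castSucc) (ω i.succ))
    (hrev : ∀ x y, Q x y → H x + Δ x y = Δ y x + H y)
    (x₀ x₁ x₂ : X) (Γm : ℝ)
    (hne12 : x₁ ≠ x₂) (hne10 : x₁ ≠ x₀) (hne20 : x₂ ≠ x₀)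
    -- x₀ is the unique ground state :
    (hground : ∀ y : X, H x₀ ≤ H y)
    (huniq : ∀ y : X, (∀ z : X, H y ≤ H z) → y = x₀)
    -- Γ_m is the maximal stability level and X_m = {x₁, x₂} :
    (hV1 : stabLevel Q H Δ x₁ = Γm) (hV2 : stabLevel Q H Δ x₂ = Γm)
    (hmax : ∀ x : X, x ≠ x₀ → stabLevel Q H Δ x ≤ Γm)
    (hXm : ∀ x : X, x ≠ x₀ → stabLevel Q H Δ x = Γm → x = x₁ ∨ x = x₂)
    (hH21 : H x₁ < H x₂) :
    ∀ x : X, x ≠ x₁ → H x ≤ H x₁ → Γm ≤ commHeight Q H Δ x x₁ - H x₁ := by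
  intro x hx hHx
  -- H x₀ < H for anything ≠ x₀
  have hstrict : ∀ y : X, y ≠ x₀ → H x₀ < H y := by
    intro y hy
    rcases lt_or_eq_of_le (hground y) with h | h
    · exact h
    · exact absurd (huniq y fun z => h ▸ hground z) hy
  -- key: Γm ≤ Φ(x₁, y) - H x₁ for any y with H y < H x₁
  have hlow : ∀ y : X, H y < H x₁ → Γm + H x₁ ≤ commHeight Q H Δ x₁ y := by
    intro y hy
    have := Stmt6Aux.stabLevel_le Q H Δ hy
    rw [hV1] at this
    linarith
  have hsymm := Stmt6Aux.commHeight_symm Q H Δ hQsymm hrev x x₁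
  rcases lt_or_eq_of_le hHx with hlt | heq
  · -- case H x < H x₁
    have := hlow x hlt
    rw [hsymm]
    linarith
  · -- case H x = H x₁
    have hx0 : x ≠ x₀ := fun h => by
      have := hstrict x₁ hne10; rw [h] at heq; linarith
    have hx2 : x ≠ x₂ := fun h => by rw [h] at heq; linarith
    have hVx : stabLevel Q H Δ x < Γm := by
      rcases lt_or_eq_of_le (hmax x hx0) with h | h
      · exact h
      · rcases hXm x hx0 h with h1 | h2
        · exact absurd h1 hx
        · exact absurd h2 hx2
    have hne : (Stmt6Aux.stabSet Q H Δ x).Nonempty :=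
      ⟨_, x₀, hstrict x hx0, rfl⟩
    obtain ⟨y, hy, hΦ⟩ := Stmt6Aux.stabLevel_attained Q H Δ hne
    have hΦlt : commHeight Q H Δ x y < Γm + H x₁ := by rw [hΦ, heq]; linarith
    have hy1 : H y < H x₁ := heq ▸ hy
    have htri := Stmt6Aux.commHeight_triangle Q H Δ hconn x₁ x y
    have h1 := hlow y hy1
    rw [hsymm]
    rcases max_cases (commHeight Q H Δ x₁ x) (commHeight Q H Δ x y) with ⟨he, -⟩ | ⟨he, -⟩ <;>
      rw [he] at htri <;> linarith
end

section
/- For the reversible PCA with transition probabilities p_β(x,y) = Π_{i∈Λ} f_{Θ_i x, β}(y_i), where f_{x,β}(s) = ½(1 + s·tanh[β(Σ_j k(j)x_j + h)]), the quantity -log p_β(x,y) - βV(x,y) equals Σ_{i∈Λ} log(1 + e^{-2β|Σ_j k(j-i)x_j + h|}), where V(x,y) = Σ over sites i with y_i(Σ_j k(j-i)x_j + h) < 0 of 2|Σ_j k(j-i)x_j + h|. -/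
/-! Each factor of the product is `e^{β s a} / (2 cosh (β a))`, and `2 cosh u = e^u (1 + e^{-2u})`
with `u = β |a|`. What remains per site is `β |a| - β s a`, which is `2 β |a|` exactly where
`s` and `a` disagree in sign, i.e. the site's contribution to `β V`. -/

open Finset

namespace Real

theorem half_mul_one_add_mul_tanh {s : ℝ} (hs : s = 1 ∨ s = -1) (t : ℝ) :
    1 / 2 * (1 + s * tanh t) = exp (s * t) / (2 * cosh t) := by
  rcases hs with rfl | rfl <;>
    simp only [tanh_eq_sinh_div_cosh, sinh_eq, cosh_eq, one_mul, neg_one_mul] <;>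
    field_simp <;> ring

theorem log_two_mul_cosh (u : ℝ) : log (2 * cosh u) = u + log (1 + exp (-2 * u)) := by
  have hfactor : 2 * cosh u = exp u * (1 + exp (-2 * u)) := by
    rw [cosh_eq, mul_add, mul_one, ← exp_add]
    ring_nf
  rw [hfactor, log_mul (exp_ne_zero u) (by positivity), log_exp]

theorem neg_log_half_mul_one_add_mul_tanh_sub {s : ℝ} (hs : s = 1 ∨ s = -1) (β a : ℝ) :
    -log (1 / 2 * (1 + s * tanh (β * a))) - β * (if s * a < 0 then 2 * |a| else 0)
      = log (1 + exp (-2 * β * |a|)) := by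
  have hcosh : cosh (β * a) = cosh (β * |a|) := by
    rcases abs_choice a with ha | ha <;> rw [ha]
    rw [mul_neg, cosh_neg]
  have hsa : |s * a| = |a| := by rcases hs with rfl | rfl <;> simp
  rw [half_mul_one_add_mul_tanh hs, log_div (exp_ne_zero _) (by positivity), log_exp, hcosh,
    log_two_mul_cosh, mul_assoc (-2)]
  split_ifs with hneg
  · rw [abs_of_neg hneg] at hsa
    linear_combination β * hsa
  · rw [abs_of_nonneg (not_lt.mp hneg)] at hsa
    linear_combination -β * hsa

end Real

theorem stmt10_general {Λ : Type*} [Fintype Λ] [AddCommGroup Λ]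
    (k : Λ → ℝ) (h β : ℝ)
    (x y : Λ → ℝ)
    (hy : ∀ i, y i = 1 ∨ y i = -1) :
    -Real.log (∏ i, (1/2) * (1 + y i * Real.tanh (β * ((∑ j, k (j - i) * x j) + h))))
        - β * ∑ i ∈ univ.filter (fun i => y i * ((∑ j, k (j - i) * x j) + h) < 0),
            2 * |(∑ j, k (j - i) * x j) + h|
      = ∑ i, Real.log (1 + Real.exp (-2 * β * |(∑ j, k (j - i) * x j) + h|)) := by
  have hfactor_ne :
      ∀ i ∈ univ, 1 / 2 * (1 + y i * Real.tanh (β * ((∑ j, k (j - i) * x j) + h))) ≠ 0 :=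
    fun i _ => by rw [Real.half_mul_one_add_mul_tanh (hy i)]; positivity
  rw [Real.log_prod hfactor_ne, sum_filter, mul_sum, ← sum_neg_distrib, ← sum_sub_distrib]
  exact sum_congr rfl fun i _ => Real.neg_log_half_mul_one_add_mul_tanh_sub (hy i) _ _

/-- For the reversible PCA with transition probabilities
`p_β(x,y) = Π_i ½(1 + y_i tanh[β(Σ_j k(j-i)x_j + h)])`, one has
`-log p_β(x,y) - βV(x,y) = Σ_i log(1 + e^{-2β|Σ_j k(j-i)x_j + h|})`, where
`V(x,y) = Σ_{i : y_i(Σ_j k(j-i)x_j + h) < 0} 2|Σ_j k(j-i)x_j + h|`. -/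
theorem stmt10 {Λ : Type*} [Fintype Λ] [AddCommGroup Λ]
    (k : Λ → ℝ) (h β : ℝ) (hβ : 0 < β)
    (hksymm : ∀ j, k j = k (-j))
    (x y : Λ → ℝ)
    (hx : ∀ i, x i = 1 ∨ x i = -1) (hy : ∀ i, y i = 1 ∨ y i = -1)
    -- non-degeneracy of the local fields :
    (hnd : ∀ i : Λ, (∑ j, k (j - i) * x j) + h ≠ 0) :
    -Real.log (∏ i, (1/2) * (1 + y i * Real.tanh (β * ((∑ j, k (j - i) * x j) + h))))
        - β * ∑ i ∈ univ.filter (fun i => y i * ((∑ j, k (j - i) * x j) + h) < 0),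
            2 * |(∑ j, k (j - i) * x j) + h|
      = ∑ i, Real.log (1 + Real.exp (-2 * β * |(∑ j, k (j - i) * x j) + h|)) :=
  stmt10_general k h β x y hy
end

section
/- In the Blume–Capel model with 0 < h < 1 and 2/h ∉ ℤ, the energy difference between the configuration P_c (all minuses except zeros on an ℓ_c × (ℓ_c−1) rectangle plus one protuberance on a longest side) and the all-minus configuration d equals 4ℓ_c − h[ℓ_c(ℓ_c−1) + 1], where ℓ_c = ⌊2/h⌋ + 1. -/
open Finset
set_option linter.unusedSectionVars false
set_option linter.unusedVariables false


/-- The Blume–Capel Hamiltonian on the `L × L` torus: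
`H(σ) = Σ_{⟨i,j⟩}(σ(i)-σ(j))² - h Σ_i σ(i)`, the first sum over nearest-neighbor pairs
(each unordered pair counted once, via the right and upward neighbor of each site). -/
noncomputable def bcH (L : ℕ) [NeZero L] (h : ℝ) (σ : ZMod L × ZMod L → ℝ) : ℝ :=
  (∑ i : ZMod L × ZMod L,
      ((σ i - σ (i + ((1 : ZMod L), (0 : ZMod L))))^2
        + (σ i - σ (i + ((0 : ZMod L), (1 : ZMod L))))^2))
    - h * ∑ i : ZMod L × ZMod L, σ i


lemma filterValLtCard (L m : ℕ) [NeZero L] (hm : m ≤ L) :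
    (Finset.univ.filter fun x : ZMod L => x.val < m).card = m := by
  classical
  have himg : (Finset.univ.filter fun x : ZMod L => x.val < m)
      = (Finset.range m).image (fun a : ℕ => (a : ZMod L)) := by
    ext x
    simp only [Finset.mem_filter, Finset.mem_univ, true_and, Finset.mem_image, Finset.mem_range]
    constructor
    · intro hx; exact ⟨x.val, hx, ZMod.natCast_rightInverse x⟩
    · rintro ⟨a, ha, rfl⟩; rwa [ZMod.val_cast_of_lt (lt_of_lt_of_le ha hm)]
  rw [himg, Finset.card_image_of_injOn, Finset.card_range]
  intro a ha b hb hab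
  simp only [Finset.coe_range, Set.mem_Iio] at ha hb
  have := congrArg ZMod.val hab
  rwa [ZMod.val_cast_of_lt (lt_of_lt_of_le ha hm),
    ZMod.val_cast_of_lt (lt_of_lt_of_le hb hm)] at this

lemma filterValEqCard (L a : ℕ) [NeZero L] (ha : a < L) :
    (Finset.univ.filter fun x : ZMod L => x.val = a).card = 1 := by
  classical
  have hs : (Finset.univ.filter fun x : ZMod L => x.val = a) = {(a : ZMod L)} := by
    ext x
    simp only [Finset.mem_filter, Finset.mem_univ, true_and, Finset.mem_singleton]
    constructor
    · intro hx; rw [← hx]; exact (ZMod.natCast_rightInverse x).symm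
    · rintro rfl; exact ZMod.val_cast_of_lt ha
  rw [hs, Finset.card_singleton]

lemma cardRect (L m n : ℕ) [NeZero L] (hm : m ≤ L) (hn : n ≤ L) :
    (Finset.univ.filter fun p : ZMod L × ZMod L => p.1.val < m ∧ p.2.val < n).card = m * n := by
  classical
  have hsplit : (Finset.univ.filter fun p : ZMod L × ZMod L => p.1.val < m ∧ p.2.val < n)
      = (Finset.univ.filter fun x : ZMod L => x.val < m)
        ×ˢ (Finset.univ.filter fun x : ZMod L => x.val < n) := by
    ext p
    simp [Finset.mem_product]
  rw [hsplit, Finset.card_product, filterValLtCard L m hm, filterValLtCard L n hn]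

lemma cardMain (L m n a b : ℕ) [NeZero L] (hm : m ≤ L) (hn : n ≤ L) (ha : a < L) (hb : b < L)
    (hma : m ≤ a) :
    (Finset.univ.filter fun p : ZMod L × ZMod L =>
        (p.1.val < m ∧ p.2.val < n) ∨ (p.1.val = a ∧ p.2.val = b)).card = m * n + 1 := by
  classical
  rw [Finset.filter_or, Finset.card_union_of_disjoint]
  · rw [cardRect L m n hm hn]
    have hsplit : (Finset.univ.filter fun p : ZMod L × ZMod L => p.1.val = a ∧ p.2.val = b)
        = (Finset.univ.filter fun x : ZMod L => x.val = a)
          ×ˢ (Finset.univ.filter fun x : ZMod L => x.val = b) := by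
      ext p
      simp [Finset.mem_product]
    rw [hsplit, Finset.card_product, filterValEqCard L a ha, filterValEqCard L b hb]
  · rw [Finset.disjoint_left]
    intro p hp hq
    simp only [Finset.mem_filter, Finset.mem_univ, true_and] at hp hq
    omega


section
variable (L lc : ℕ) [NeZero L]

/-- indicator of the droplet -/
noncomputable def indZ : ZMod L × ZMod L → ℝ :=
  fun p => if (p.1.val < lc - 1 ∧ p.2.val < lc) ∨ (p.1.val = lc - 1 ∧ p.2.val = 0)
    then 1 else 0

lemma indZ_sq (p : ZMod L × ZMod L) : (indZ L lc p) ^ 2 = indZ L lc p := by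
  unfold indZ; split <;> norm_num

lemma indZ_shift (e : ZMod L × ZMod L) :
    ∑ p : ZMod L × ZMod L, (indZ L lc (p + e)) ^ 2
      = ∑ p : ZMod L × ZMod L, (indZ L lc p) ^ 2 :=
  Fintype.sum_equiv (Equiv.addRight e) _ _ (fun p => rfl)

lemma indZ_mul (e : ZMod L × ZMod L) :
    ∑ p : ZMod L × ZMod L, indZ L lc p * indZ L lc (p + e)
      = ((Finset.univ.filter fun p : ZMod L × ZMod L =>
          ((p.1.val < lc - 1 ∧ p.2.val < lc) ∨ (p.1.val = lc - 1 ∧ p.2.val = 0))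
          ∧ (((p+e).1.val < lc - 1 ∧ (p+e).2.val < lc)
              ∨ ((p+e).1.val = lc - 1 ∧ (p+e).2.val = 0))).card : ℝ) := by
  classical
  have key : ∀ p : ZMod L × ZMod L, indZ L lc p * indZ L lc (p + e)
      = if ((p.1.val < lc - 1 ∧ p.2.val < lc) ∨ (p.1.val = lc - 1 ∧ p.2.val = 0))
          ∧ (((p+e).1.val < lc - 1 ∧ (p+e).2.val < lc)
              ∨ ((p+e).1.val = lc - 1 ∧ (p+e).2.val = 0)) then (1:ℝ) else 0 := by
    intro p
    unfold indZ
    by_cases h1 : ((p.1.val < lc - 1 ∧ p.2.val < lc) ∨ (p.1.val = lc - 1 ∧ p.2.val = 0)) <;>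
      by_cases h2 : (((p+e).1.val < lc - 1 ∧ (p+e).2.val < lc)
              ∨ ((p+e).1.val = lc - 1 ∧ (p+e).2.val = 0))
    · rw [if_pos h1, if_pos h2, if_pos ⟨h1, h2⟩]; norm_num
    · rw [if_pos h1, if_neg h2, if_neg (fun hc => h2 hc.2)]; norm_num
    · rw [if_neg h1, if_pos h2, if_neg (fun hc => h1 hc.1)]; norm_num
    · rw [if_neg h1, if_neg h2, if_neg (fun hc => h1 hc.1)]; norm_num
  simp only [key]
  rw [Finset.sum_boole]

lemma indZ_sum :
    ∑ p : ZMod L × ZMod L, indZ L lc p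
      = ((Finset.univ.filter fun p : ZMod L × ZMod L =>
          ((p.1.val < lc - 1 ∧ p.2.val < lc) ∨ (p.1.val = lc - 1 ∧ p.2.val = 0))).card : ℝ) := by
  classical
  unfold indZ
  rw [Finset.sum_boole]

end


/-- With `0 < h < 1`, `2/h ∉ ℤ`, `ℓ_c = ⌊2/h⌋ + 1`, the energy difference
between a configuration in `P_c` (all minuses except zeros on an `(ℓ_c-1) × ℓ_c` rectangle
plus one protuberance adjacent to a longest side) and the all-minus configuration `d` equals
`4ℓ_c - h[ℓ_c(ℓ_c-1) + 1]`. -/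
theorem stmt13 (L : ℕ) [NeZero L] (h : ℝ) (h0 : 0 < h) (h1 : h < 1)
    (hni : ¬ ∃ n : ℤ, (n : ℝ) = 2 / h)
    (lc : ℕ) (hlc : lc = ⌊(2:ℝ)/h⌋₊ + 1)
    (hL : lc + 2 < L) :
    bcH L h (fun p =>
        if (p.1.val < lc - 1 ∧ p.2.val < lc) ∨ (p.1.val = lc - 1 ∧ p.2.val = 0)
        then 0 else -1)
      - bcH L h (fun _ => -1)
      = 4 * (lc : ℝ) - h * ((lc : ℝ) * ((lc : ℝ) - 1) + 1) := by
  classical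
  have hlc3 : 3 ≤ lc := by
    have h2 : (2:ℝ) ≤ 2 / h := by
      rw [le_div_iff₀ h0]; nlinarith
    have h3 : 2 ≤ ⌊(2:ℝ)/h⌋₊ := Nat.le_floor h2
    omega
  have hL1 : 1 < L := by omega
  have hval1 : (1 : ZMod L).val = 1 := by
    rw [ZMod.val_one_eq_one_mod]; exact Nat.mod_eq_of_lt hL1
  have hadd : ∀ x : ZMod L, x.val + 1 < L → (x + 1).val = x.val + 1 := by
    intro x hx
    rw [ZMod.val_add_of_lt (by rw [hval1]; omega), hval1]
  -- rewrite the configuration as indicator minus one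
  have hfun : (fun p : ZMod L × ZMod L =>
      if (p.1.val < lc - 1 ∧ p.2.val < lc) ∨ (p.1.val = lc - 1 ∧ p.2.val = 0)
      then (0:ℝ) else -1) = fun p => indZ L lc p - 1 := by
    funext p; unfold indZ; split <;> norm_num
  rw [hfun]
  have hbcd : bcH L h (fun _ => -1) = h * ((Fintype.card (ZMod L × ZMod L) : ℕ) : ℝ) := by
    unfold bcH
    simp [Finset.sum_const, Finset.card_univ, nsmul_eq_mul]
  have hbcσ : bcH L h (fun p => indZ L lc p - 1)
      = (∑ p : ZMod L × ZMod L,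
          ((indZ L lc p - indZ L lc (p + ((1 : ZMod L), (0 : ZMod L))))^2
            + (indZ L lc p - indZ L lc (p + ((0 : ZMod L), (1 : ZMod L))))^2))
        - h * (∑ p : ZMod L × ZMod L, indZ L lc p)
        + h * ((Fintype.card (ZMod L × ZMod L) : ℕ) : ℝ) := by
    unfold bcH
    rw [Finset.sum_sub_distrib, Finset.sum_const, Finset.card_univ, nsmul_eq_mul]
    have h1 : ∑ i : ZMod L × ZMod L,
        (((indZ L lc i - 1) - (indZ L lc (i + ((1 : ZMod L), (0 : ZMod L))) - 1))^2
          + ((indZ L lc i - 1) - (indZ L lc (i + ((0 : ZMod L), (1 : ZMod L))) - 1))^2)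
        = ∑ i : ZMod L × ZMod L,
          ((indZ L lc i - indZ L lc (i + ((1 : ZMod L), (0 : ZMod L))))^2
            + (indZ L lc i - indZ L lc (i + ((0 : ZMod L), (1 : ZMod L))))^2) :=
      Finset.sum_congr rfl (fun i _ => by ring)
    rw [h1]; ring
  rw [hbcσ, hbcd]
  -- counting
  have hcard0 : (Finset.univ.filter fun p : ZMod L × ZMod L =>
      (p.1.val < lc - 1 ∧ p.2.val < lc) ∨ (p.1.val = lc - 1 ∧ p.2.val = 0)).card
      = (lc-1)*lc + 1 :=
    cardMain L (lc-1) lc (lc-1) 0 (by omega) (by omega) (by omega) (by omega) le_rfl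
  have hiff1 : ∀ p : ZMod L × ZMod L,
      (((p.1.val < lc - 1 ∧ p.2.val < lc) ∨ (p.1.val = lc - 1 ∧ p.2.val = 0))
        ∧ (((p + ((1 : ZMod L), (0 : ZMod L))).1.val < lc - 1
              ∧ (p + ((1 : ZMod L), (0 : ZMod L))).2.val < lc)
            ∨ ((p + ((1 : ZMod L), (0 : ZMod L))).1.val = lc - 1
              ∧ (p + ((1 : ZMod L), (0 : ZMod L))).2.val = 0)))
      ↔ ((p.1.val < lc - 2 ∧ p.2.val < lc) ∨ (p.1.val = lc - 2 ∧ p.2.val = 0)) := by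
    intro p
    simp only [Prod.fst_add, Prod.snd_add, add_zero]
    by_cases hx : p.1.val + 1 < L
    · rw [hadd p.1 hx]; omega
    · have := ZMod.val_lt p.1; omega
  have hiff2 : ∀ p : ZMod L × ZMod L,
      (((p.1.val < lc - 1 ∧ p.2.val < lc) ∨ (p.1.val = lc - 1 ∧ p.2.val = 0))
        ∧ (((p + ((0 : ZMod L), (1 : ZMod L))).1.val < lc - 1
              ∧ (p + ((0 : ZMod L), (1 : ZMod L))).2.val < lc)
            ∨ ((p + ((0 : ZMod L), (1 : ZMod L))).1.val = lc - 1
              ∧ (p + ((0 : ZMod L), (1 : ZMod L))).2.val = 0)))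
      ↔ (p.1.val < lc - 1 ∧ p.2.val < lc - 1) := by
    intro p
    simp only [Prod.fst_add, Prod.snd_add, add_zero]
    by_cases hy : p.2.val + 1 < L
    · rw [hadd p.2 hy]; omega
    · have := ZMod.val_lt p.2; omega
  have hcard1 : (Finset.univ.filter fun p : ZMod L × ZMod L =>
      (((p.1.val < lc - 1 ∧ p.2.val < lc) ∨ (p.1.val = lc - 1 ∧ p.2.val = 0))
        ∧ (((p + ((1 : ZMod L), (0 : ZMod L))).1.val < lc - 1
              ∧ (p + ((1 : ZMod L), (0 : ZMod L))).2.val < lc)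
            ∨ ((p + ((1 : ZMod L), (0 : ZMod L))).1.val = lc - 1
              ∧ (p + ((1 : ZMod L), (0 : ZMod L))).2.val = 0)))).card
      = (lc-2)*lc + 1 := by
    rw [Finset.filter_congr (fun p _ => hiff1 p)]
    exact cardMain L (lc-2) lc (lc-2) 0 (by omega) (by omega) (by omega) (by omega) le_rfl
  have hcard2 : (Finset.univ.filter fun p : ZMod L × ZMod L =>
      (((p.1.val < lc - 1 ∧ p.2.val < lc) ∨ (p.1.val = lc - 1 ∧ p.2.val = 0))
        ∧ (((p + ((0 : ZMod L), (1 : ZMod L))).1.val < lc - 1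
              ∧ (p + ((0 : ZMod L), (1 : ZMod L))).2.val < lc)
            ∨ ((p + ((0 : ZMod L), (1 : ZMod L))).1.val = lc - 1
              ∧ (p + ((0 : ZMod L), (1 : ZMod L))).2.val = 0)))).card
      = (lc-1)*(lc-1) := by
    rw [Finset.filter_congr (fun p _ => hiff2 p)]
    exact cardRect L (lc-1) (lc-1) (by omega) (by omega)
  have hS : ∑ p : ZMod L × ZMod L, indZ L lc p = (((lc-1)*lc + 1 : ℕ) : ℝ) := by
    rw [indZ_sum, hcard0]
  have hT1 : ∑ p : ZMod L × ZMod L,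
      indZ L lc p * indZ L lc (p + ((1 : ZMod L), (0 : ZMod L)))
      = (((lc-2)*lc + 1 : ℕ) : ℝ) := by
    rw [indZ_mul, hcard1]
  have hT2 : ∑ p : ZMod L × ZMod L,
      indZ L lc p * indZ L lc (p + ((0 : ZMod L), (1 : ZMod L)))
      = (((lc-1)*(lc-1) : ℕ) : ℝ) := by
    rw [indZ_mul, hcard2]
  have hE : ∑ p : ZMod L × ZMod L,
      ((indZ L lc p - indZ L lc (p + ((1 : ZMod L), (0 : ZMod L))))^2
        + (indZ L lc p - indZ L lc (p + ((0 : ZMod L), (1 : ZMod L))))^2)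
      = 4*(((lc-1)*lc + 1 : ℕ) : ℝ) - 2*(((lc-2)*lc + 1 : ℕ) : ℝ)
        - 2*(((lc-1)*(lc-1) : ℕ) : ℝ) := by
    have expand : ∀ p : ZMod L × ZMod L,
        ((indZ L lc p - indZ L lc (p + ((1 : ZMod L), (0 : ZMod L))))^2
          + (indZ L lc p - indZ L lc (p + ((0 : ZMod L), (1 : ZMod L))))^2)
        = (((indZ L lc p)^2 + (indZ L lc (p + ((1 : ZMod L), (0 : ZMod L))))^2)
            + ((indZ L lc p)^2 + (indZ L lc (p + ((0 : ZMod L), (1 : ZMod L))))^2))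
          - (2*(indZ L lc p * indZ L lc (p + ((1 : ZMod L), (0 : ZMod L))))
            + 2*(indZ L lc p * indZ L lc (p + ((0 : ZMod L), (1 : ZMod L))))) :=
      fun p => by ring
    simp only [expand]
    rw [Finset.sum_sub_distrib, Finset.sum_add_distrib, Finset.sum_add_distrib,
      Finset.sum_add_distrib, Finset.sum_add_distrib, indZ_shift, indZ_shift,
      ← Finset.mul_sum, ← Finset.mul_sum]
    simp only [indZ_sq]
    rw [hS, hT1, hT2]
    ring
  rw [hE, hS]
  have c1 : ((lc - 1 : ℕ) : ℝ) = (lc : ℝ) - 1 := by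
    push_cast [Nat.cast_sub (show 1 ≤ lc by omega)]; ring
  have c2 : ((lc - 2 : ℕ) : ℝ) = (lc : ℝ) - 2 := by
    push_cast [Nat.cast_sub (show 2 ≤ lc by omega)]; ring
  push_cast [c1, c2]
  ring
end

section
/- In the Blume–Capel model with 0 < h < 1, a configuration with a rectangular droplet of zeros with a zero protuberance of length 1 on one side (sides ℓ₁,ℓ₂ ≥ 2) admits exactly two energy-decreasing single spin flips: removing the protuberance (flipping the protuberance zero back to −1, decreasing energy by 2−h) and enlarging the protuberance (flipping to 0 a minus adjacent to the protuberance along the same side, decreasing energy by h). -/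
/-- A rectangular droplet of zeros of side lengths `ℓ₁ × ℓ₂` in a sea of minuses, with a
single-site zero protuberance at `(ℓ₁, b)`, adjacent to the (east) side of the rectangle. -/
def protConf (L ℓ₁ ℓ₂ b : ℕ) : ZMod L × ZMod L → ℝ :=
  fun p => if (p.1.val < ℓ₁ ∧ p.2.val < ℓ₂) ∨ (p.1.val = ℓ₁ ∧ p.2.val = b) then 0 else -1

/-- Sum of the values of the four nearest neighbors. -/
noncomputable def nbrSum (L : ℕ) [NeZero L] (σ : ZMod L × ZMod L → ℝ)
    (x : ZMod L × ZMod L) : ℝ :=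
  σ (x + ((1 : ZMod L), (0 : ZMod L))) + σ (x - ((1 : ZMod L), (0 : ZMod L)))
    + σ (x + ((0 : ZMod L), (1 : ZMod L))) + σ (x - ((0 : ZMod L), (1 : ZMod L)))

lemma flip_factored (L : ℕ) [NeZero L] (hL : 5 ≤ L) (h : ℝ)
    (σ : ZMod L × ZMod L → ℝ) (x : ZMod L × ZMod L) (v : ℝ) :
    bcH L h (Function.update σ x v) - bcH L h σ
      = (v - σ x) * (4 * (v + σ x) - 2 * nbrSum L σ x - h) := by
  haveI : Fact (1 < L) := ⟨by omega⟩
  set e1 : ZMod L × ZMod L := ((1 : ZMod L), (0 : ZMod L)) with he1def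
  set e2 : ZMod L × ZMod L := ((0 : ZMod L), (1 : ZMod L)) with he2def
  have he1 : e1 ≠ 0 := by
    simp [he1def, Prod.ext_iff, one_ne_zero]
  have he2 : e2 ≠ 0 := by
    simp [he2def, Prod.ext_iff, one_ne_zero]
  have he12 : e1 ≠ e2 := by
    simp [he1def, he2def, Prod.ext_iff, one_ne_zero]
  have hx1 : x - e1 ≠ x := by
    intro hc; exact he1 (by linear_combination (norm := abel) -hc)
  have hx2 : x - e2 ≠ x := by
    intro hc; exact he2 (by linear_combination (norm := abel) -hc)
  have hx12 : x - e1 ≠ x - e2 := by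
    intro hc; exact he12 (by linear_combination (norm := abel) -hc)
  set σ' := Function.update σ x v with hσ'
  set f : (ZMod L × ZMod L → ℝ) → ZMod L × ZMod L → ℝ :=
    fun τ i => (τ i - τ (i + e1))^2 + (τ i - τ (i + e2))^2 with hf
  have hsum : ∑ i : ZMod L × ZMod L, σ' i = (∑ i : ZMod L × ZMod L, σ i) + (v - σ x) := by
    rw [hσ', Finset.sum_update_of_mem (Finset.mem_univ x),
      Finset.sdiff_singleton_eq_erase, ← Finset.add_sum_erase _ σ (Finset.mem_univ x)]
    ring
  have hbond : ∑ i : ZMod L × ZMod L, f σ' i - ∑ i : ZMod L × ZMod L, f σ i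
      = ∑ i ∈ ({x, x - e1, x - e2} : Finset (ZMod L × ZMod L)), (f σ' i - f σ i) := by
    rw [← Finset.sum_sub_distrib]
    refine (Finset.sum_subset (Finset.subset_univ _) ?_).symm
    intro i _ hi
    simp only [Finset.mem_insert, Finset.mem_singleton, not_or] at hi
    obtain ⟨h1, h2, h3⟩ := hi
    have n1 : i + e1 ≠ x := fun hc => h2 (by rw [← hc]; abel)
    have n2 : i + e2 ≠ x := fun hc => h3 (by rw [← hc]; abel)
    simp [hf, hσ', Function.update_of_ne h1, Function.update_of_ne n1,
      Function.update_of_ne n2]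
  have hmem1 : x ∉ ({x - e1, x - e2} : Finset (ZMod L × ZMod L)) := by
    simp only [Finset.mem_insert, Finset.mem_singleton]
    push_neg
    exact ⟨fun hc => hx1 hc.symm, fun hc => hx2 hc.symm⟩
  have hmem2 : x - e1 ∉ ({x - e2} : Finset (ZMod L × ZMod L)) := by
    simpa using hx12
  have hexp : ∑ i ∈ ({x, x - e1, x - e2} : Finset (ZMod L × ZMod L)), (f σ' i - f σ i)
      = (f σ' x - f σ x) + (f σ' (x - e1) - f σ (x - e1))
        + (f σ' (x - e2) - f σ (x - e2)) := by
    rw [Finset.sum_insert hmem1, Finset.sum_insert hmem2, Finset.sum_singleton]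
    ring
  have e11 : x + e1 ≠ x := fun hc => he1 (by linear_combination (norm := abel) hc)
  have e22 : x + e2 ≠ x := fun hc => he2 (by linear_combination (norm := abel) hc)
  have c1 : x - e1 + e1 = x := by abel
  have c2 : x - e2 + e2 = x := by abel
  have d1 : x - e1 + e2 ≠ x := fun hc => hx12 (by linear_combination (norm := abel) hc)
  have d2 : x - e2 + e1 ≠ x := fun hc => hx12 (by linear_combination (norm := abel) -hc)
  have hv1 : f σ' x = (v - σ (x + e1))^2 + (v - σ (x + e2))^2 := by
    simp [hf, hσ', Function.update_self, Function.update_of_ne e11,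
      Function.update_of_ne e22]
  have hv2 : f σ' (x - e1) = (σ (x - e1) - v)^2 + (σ (x - e1) - σ (x - e1 + e2))^2 := by
    simp only [hf, hσ']
    rw [c1, Function.update_self, Function.update_of_ne hx1, Function.update_of_ne d1]
  have hv3 : f σ' (x - e2) = (σ (x - e2) - σ (x - e2 + e1))^2 + (σ (x - e2) - v)^2 := by
    simp only [hf, hσ']
    rw [c2, Function.update_self, Function.update_of_ne hx2, Function.update_of_ne d2]
  have hf2 : f σ (x - e1) = (σ (x - e1) - σ x)^2 + (σ (x - e1) - σ (x - e1 + e2))^2 := by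
    simp [hf, c1]
  have hf3 : f σ (x - e2) = (σ (x - e2) - σ (x - e2 + e1))^2 + (σ (x - e2) - σ x)^2 := by
    simp [hf, c2]
  have key : bcH L h σ' - bcH L h σ
      = (∑ i : ZMod L × ZMod L, f σ' i - ∑ i : ZMod L × ZMod L, f σ i)
        - h * (v - σ x) := by
    simp only [bcH, hf, hsum]; ring
  rw [key, hbond, hexp, hv1, hv2, hv3, hf2, hf3]
  simp only [hf, nbrSum, ← he1def, ← he2def]
  ring

section ZModHelpers

variable {L : ℕ} [NeZero L]

lemma add_one_char (hL : 5 ≤ L) (x : ZMod L) :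
    (x.val + 1 = L ∧ (x + 1).val = 0) ∨ (x.val + 1 < L ∧ (x + 1).val = x.val + 1) := by
  haveI : Fact (1 < L) := ⟨by omega⟩
  have hx := ZMod.val_lt x
  rw [ZMod.val_add, ZMod.val_one]
  rcases eq_or_lt_of_le (Nat.succ_le_of_lt hx) with h | h
  · left; simp [← h]
  · right; exact ⟨h, Nat.mod_eq_of_lt h⟩

lemma sub_one_char (hL : 5 ≤ L) (x : ZMod L) :
    (x.val = 0 ∧ (x - 1).val = L - 1) ∨ (1 ≤ x.val ∧ (x - 1).val = x.val - 1) := by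
  have hx := ZMod.val_lt x
  have hneg : ((-1 : ZMod L)).val = L - 1 := by
    obtain ⟨m, rfl⟩ : ∃ m, L = m + 1 := ⟨L - 1, by omega⟩
    exact ZMod.val_neg_one m
  have hs : x - 1 = x + (-1) := by ring
  rw [hs, ZMod.val_add, hneg]
  rcases Nat.eq_zero_or_pos x.val with h | h
  · left
    refine ⟨h, ?_⟩
    rw [h, Nat.zero_add, Nat.mod_eq_of_lt (by omega)]
  · right
    refine ⟨h, ?_⟩
    have : x.val + (L - 1) = (x.val - 1) + L := by omega
    rw [this, Nat.add_mod_right, Nat.mod_eq_of_lt (by omega)]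

lemma eq_cast_iff (x : ZMod L) (c : ℕ) (hc : c < L) : x = (c : ZMod L) ↔ x.val = c := by
  constructor
  · rintro rfl; exact ZMod.val_cast_of_lt hc
  · intro h
    have := congrArg (Nat.cast : ℕ → ZMod L) h
    rwa [ZMod.natCast_rightInverse x] at this

lemma val_eq_val_iff (x y : ZMod L) : x = y ↔ x.val = y.val := by
  constructor
  · rintro rfl; rfl
  · intro h
    have := congrArg (Nat.cast : ℕ → ZMod L) h
    rwa [ZMod.natCast_rightInverse x, ZMod.natCast_rightInverse y] at this

end ZModHelpers

set_option maxHeartbeats 1000000 in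
lemma natMaster (L l1 l2 b : ℕ) (h2a : 2 ≤ l1) (h2b : 2 ≤ l2)
    (hLa : l1 + 2 < L) (hLb : l2 + 2 < L) (hb : b < l2)
    (α β αp αm βp βm bm : ℕ) (hα : α < L) (hβ : β < L)
    (hαp : (α + 1 = L ∧ αp = 0) ∨ (α + 1 < L ∧ αp = α + 1))
    (hαm : (α = 0 ∧ αm = L - 1) ∨ (1 ≤ α ∧ αm = α - 1))
    (hβp : (β + 1 = L ∧ βp = 0) ∨ (β + 1 < L ∧ βp = β + 1))
    (hβm : (β = 0 ∧ βm = L - 1) ∨ (1 ≤ β ∧ βm = β - 1))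
    (hbm : (b = 0 ∧ bm = L - 1) ∨ (1 ≤ b ∧ bm = b - 1)) :
    ((α = l1 ∧ β = b) →
      (((α < l1 ∧ β < l2) ∨ (α = l1 ∧ β = b))
        ∧ ¬((αp < l1 ∧ β < l2) ∨ (αp = l1 ∧ β = b))
        ∧ ((αm < l1 ∧ β < l2) ∨ (αm = l1 ∧ β = b))
        ∧ ¬((α < l1 ∧ βp < l2) ∨ (α = l1 ∧ βp = b))
        ∧ ¬((α < l1 ∧ βm < l2) ∨ (α = l1 ∧ βm = b))))
    ∧ (((α < l1 ∧ β < l2) ∨ (α = l1 ∧ β = b)) → ¬(α = l1 ∧ β = b) →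
      ((((αp < l1 ∧ β < l2) ∨ (αp = l1 ∧ β = b))
          ∨ ((αm < l1 ∧ β < l2) ∨ (αm = l1 ∧ β = b)))
        ∧ (((α < l1 ∧ βp < l2) ∨ (α = l1 ∧ βp = b))
          ∨ ((α < l1 ∧ βm < l2) ∨ (α = l1 ∧ βm = b)))))
    ∧ ((α = l1 ∧ (β = b + 1 ∨ β = bm) ∧ β < l2) →
      (¬((α < l1 ∧ β < l2) ∨ (α = l1 ∧ β = b))
        ∧ ¬((αp < l1 ∧ β < l2) ∨ (αp = l1 ∧ β = b))
        ∧ ((αm < l1 ∧ β < l2) ∨ (αm = l1 ∧ β = b))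
        ∧ ((¬((α < l1 ∧ βp < l2) ∨ (α = l1 ∧ βp = b))
              ∧ ((α < l1 ∧ βm < l2) ∨ (α = l1 ∧ βm = b)))
          ∨ (((α < l1 ∧ βp < l2) ∨ (α = l1 ∧ βp = b))
              ∧ ¬((α < l1 ∧ βm < l2) ∨ (α = l1 ∧ βm = b))))))
    ∧ (¬((α < l1 ∧ β < l2) ∨ (α = l1 ∧ β = b)) →
        ¬(α = l1 ∧ (β = b + 1 ∨ β = bm) ∧ β < l2) →
      ((¬((αp < l1 ∧ β < l2) ∨ (αp = l1 ∧ β = b))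
          ∧ ¬((αm < l1 ∧ β < l2) ∨ (αm = l1 ∧ β = b))
          ∧ ¬((α < l1 ∧ βp < l2) ∨ (α = l1 ∧ βp = b)))
        ∨ (¬((αp < l1 ∧ β < l2) ∨ (αp = l1 ∧ β = b))
          ∧ ¬((αm < l1 ∧ β < l2) ∨ (αm = l1 ∧ β = b))
          ∧ ¬((α < l1 ∧ βm < l2) ∨ (α = l1 ∧ βm = b)))
        ∨ (¬((αp < l1 ∧ β < l2) ∨ (αp = l1 ∧ β = b))
          ∧ ¬((α < l1 ∧ βp < l2) ∨ (α = l1 ∧ βp = b))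
          ∧ ¬((α < l1 ∧ βm < l2) ∨ (α = l1 ∧ βm = b)))
        ∨ (¬((αm < l1 ∧ β < l2) ∨ (αm = l1 ∧ β = b))
          ∧ ¬((α < l1 ∧ βp < l2) ∨ (α = l1 ∧ βp = b))
          ∧ ¬((α < l1 ∧ βm < l2) ∨ (α = l1 ∧ βm = b))))) := by
  refine ⟨fun hq => ?_, fun hP hnq => ?_, fun hE => ?_, fun hnP hnE => ?_⟩
  · omega
  · omega
  · omega
  · omega

lemma master {L : ℕ} [NeZero L] (l1 l2 b : ℕ) (h2a : 2 ≤ l1) (h2b : 2 ≤ l2)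
    (hLa : l1 + 2 < L) (hLb : l2 + 2 < L) (hb : b < l2) (x : ZMod L × ZMod L) :
    (protConf L l1 l2 b x = 0 ∨ protConf L l1 l2 b x = -1)
    ∧ (x = ((l1 : ZMod L), (b : ZMod L)) →
        protConf L l1 l2 b x = 0 ∧ nbrSum L (protConf L l1 l2 b) x = -3)
    ∧ (protConf L l1 l2 b x = 0 → x ≠ ((l1 : ZMod L), (b : ZMod L)) →
        -2 ≤ nbrSum L (protConf L l1 l2 b) x ∧ nbrSum L (protConf L l1 l2 b) x ≤ 0)
    ∧ ((x.1 = (l1 : ZMod L) ∧ (x.2 = (b : ZMod L) + 1 ∨ x.2 = (b : ZMod L) - 1)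
          ∧ x.2.val < l2) →
        protConf L l1 l2 b x = -1 ∧ nbrSum L (protConf L l1 l2 b) x = -2)
    ∧ (protConf L l1 l2 b x = -1 →
        ¬(x.1 = (l1 : ZMod L) ∧ (x.2 = (b : ZMod L) + 1 ∨ x.2 = (b : ZMod L) - 1)
          ∧ x.2.val < l2) →
        nbrSum L (protConf L l1 l2 b) x ≤ -3) := by
  have hL : 5 ≤ L := by omega
  have hbL : b < L := by omega
  have hl1L : l1 < L := by omega
  have hb1L : b + 1 < L := by omega
  have hc1 : (x + ((1 : ZMod L), (0 : ZMod L))) = (x.1 + 1, x.2) := by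
    ext <;> simp
  have hc2 : (x - ((1 : ZMod L), (0 : ZMod L))) = (x.1 - 1, x.2) := by
    ext <;> simp
  have hc3 : (x + ((0 : ZMod L), (1 : ZMod L))) = (x.1, x.2 + 1) := by
    ext <;> simp
  have hc4 : (x - ((0 : ZMod L), (1 : ZMod L))) = (x.1, x.2 - 1) := by
    ext <;> simp
  have hbv : ((b : ZMod L)).val = b := ZMod.val_cast_of_lt hbL
  have hbmchar := sub_one_char hL (b : ZMod L)
  rw [hbv] at hbmchar
  obtain ⟨C1, C2, C3, C4⟩ := natMaster L l1 l2 b h2a h2b hLa hLb hb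
    x.1.val x.2.val (x.1 + 1).val (x.1 - 1).val (x.2 + 1).val (x.2 - 1).val
    ((b : ZMod L) - 1).val (ZMod.val_lt x.1) (ZMod.val_lt x.2)
    (add_one_char hL x.1) (sub_one_char hL x.1)
    (add_one_char hL x.2) (sub_one_char hL x.2) hbmchar
  have hq : x = ((l1 : ZMod L), (b : ZMod L)) ↔ (x.1.val = l1 ∧ x.2.val = b) := by
    rw [Prod.ext_iff, eq_cast_iff x.1 l1 hl1L, eq_cast_iff x.2 b hbL]
  have hE : (x.1 = (l1 : ZMod L) ∧ (x.2 = (b : ZMod L) + 1 ∨ x.2 = (b : ZMod L) - 1)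
        ∧ x.2.val < l2)
      ↔ (x.1.val = l1 ∧ (x.2.val = b + 1 ∨ x.2.val = ((b : ZMod L) - 1).val)
        ∧ x.2.val < l2) := by
    rw [eq_cast_iff x.1 l1 hl1L]
    have hcast : ((b : ZMod L) + 1) = ((b + 1 : ℕ) : ZMod L) := by push_cast; ring
    rw [hcast, eq_cast_iff x.2 (b + 1) hb1L, val_eq_val_iff x.2 ((b : ZMod L) - 1)]
  have hx0 : protConf L l1 l2 b x
      = if (x.1.val < l1 ∧ x.2.val < l2) ∨ (x.1.val = l1 ∧ x.2.val = b)
        then (0 : ℝ) else -1 := rfl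
  have hnb : nbrSum L (protConf L l1 l2 b) x
      = (if ((x.1 + 1).val < l1 ∧ x.2.val < l2) ∨ ((x.1 + 1).val = l1 ∧ x.2.val = b)
          then (0 : ℝ) else -1)
        + (if ((x.1 - 1).val < l1 ∧ x.2.val < l2) ∨ ((x.1 - 1).val = l1 ∧ x.2.val = b)
          then (0 : ℝ) else -1)
        + (if (x.1.val < l1 ∧ (x.2 + 1).val < l2) ∨ (x.1.val = l1 ∧ (x.2 + 1).val = b)
          then (0 : ℝ) else -1)
        + (if (x.1.val < l1 ∧ (x.2 - 1).val < l2) ∨ (x.1.val = l1 ∧ (x.2 - 1).val = b)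
          then (0 : ℝ) else -1) := by
    rw [nbrSum, hc1, hc2, hc3, hc4]; rfl
  refine ⟨?_, ?_, ?_, ?_, ?_⟩
  · rw [hx0]; split <;> simp
  · intro hxq
    obtain ⟨P0, nP1, P2, nP3, nP4⟩ := C1 (hq.mp hxq)
    rw [hx0, hnb, if_pos P0, if_neg nP1, if_pos P2, if_neg nP3, if_neg nP4]
    norm_num
  · intro h0 hne
    have hP0 : (x.1.val < l1 ∧ x.2.val < l2) ∨ (x.1.val = l1 ∧ x.2.val = b) := by
      by_contra hc
      rw [hx0, if_neg hc] at h0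
      norm_num at h0
    obtain ⟨h12, h34⟩ := C2 hP0 (fun hc => hne (hq.mpr hc))
    rw [hnb]
    constructor
    · rcases h12 with hP | hP <;> rcases h34 with hQ | hQ <;>
        rw [if_pos hP, if_pos hQ] <;> split_ifs <;> norm_num
    · split_ifs <;> norm_num
  · intro hEx
    obtain ⟨nP0, nP1, P2, hrest⟩ := C3 (hE.mp hEx)
    rw [hx0, hnb, if_neg nP1, if_pos P2]
    rcases hrest with ⟨nP3, P4⟩ | ⟨P3, nP4⟩
    · rw [if_neg nP3, if_pos P4, if_neg nP0]; norm_num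
    · rw [if_pos P3, if_neg nP4, if_neg nP0]; norm_num
  · intro hm hnE
    have nP0 : ¬((x.1.val < l1 ∧ x.2.val < l2) ∨ (x.1.val = l1 ∧ x.2.val = b)) := by
      intro hc
      rw [hx0, if_pos hc] at hm
      norm_num at hm
    have hC := C4 nP0 (fun hc => hnE (hE.mpr hc))
    rw [hnb]
    rcases hC with ⟨a, b', c⟩ | ⟨a, b', c⟩ | ⟨a, b', c⟩ | ⟨a, b', c⟩ <;>
      rw [if_neg a, if_neg b', if_neg c] <;> split_ifs <;> norm_num

/-- A rectangular droplet of zeros with a length-one zero protuberance on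
one side admits exactly two kinds of energy-decreasing single spin flips: removing the
protuberance (energy change `-(2-h)`) and enlarging the protuberance, i.e. flipping to `0`
a minus adjacent to the protuberance along the same side (energy change `-h`). -/
theorem stmt16 (L ℓ₁ ℓ₂ b : ℕ) [NeZero L] (h : ℝ) (h0 : 0 < h) (h1 : h < 1)
    (h2a : 2 ≤ ℓ₁) (h2b : 2 ≤ ℓ₂) (hLa : ℓ₁ + 2 < L) (hLb : ℓ₂ + 2 < L) (hb : b < ℓ₂) :
    -- removing the protuberance decreases the energy by 2 - h :
    (bcH L h (Function.update (protConf L ℓ₁ ℓ₂ b) ((ℓ₁ : ZMod L), (b : ZMod L)) (-1))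
        - bcH L h (protConf L ℓ₁ ℓ₂ b) = -(2 - h))
    -- enlarging the protuberance along the side decreases the energy by h :
    ∧ (∀ n : ZMod L × ZMod L, n.1 = (ℓ₁ : ZMod L) →
        (n.2 = (b : ZMod L) + 1 ∨ n.2 = (b : ZMod L) - 1) → n.2.val < ℓ₂ →
        bcH L h (Function.update (protConf L ℓ₁ ℓ₂ b) n 0)
          - bcH L h (protConf L ℓ₁ ℓ₂ b) = -h)
    -- and these are the only energy-decreasing single spin flips :
    ∧ (∀ (x : ZMod L × ZMod L) (v : ℝ), (v = -1 ∨ v = 0 ∨ v = 1) →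
        v ≠ protConf L ℓ₁ ℓ₂ b x →
        (bcH L h (Function.update (protConf L ℓ₁ ℓ₂ b) x v) < bcH L h (protConf L ℓ₁ ℓ₂ b)
          ↔ (x = ((ℓ₁ : ZMod L), (b : ZMod L)) ∧ v = -1)
            ∨ (v = 0 ∧ x.1 = (ℓ₁ : ZMod L)
                ∧ (x.2 = (b : ZMod L) + 1 ∨ x.2 = (b : ZMod L) - 1) ∧ x.2.val < ℓ₂))) := by
  have hL : 5 ≤ L := by omega
  refine ⟨?_, ?_, ?_⟩
  · obtain ⟨_, M1, _, _, _⟩ := master ℓ₁ ℓ₂ b h2a h2b hLa hLb hb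
      ((ℓ₁ : ZMod L), (b : ZMod L))
    obtain ⟨hσ, hS⟩ := M1 rfl
    rw [flip_factored L hL h (protConf L ℓ₁ ℓ₂ b) ((ℓ₁ : ZMod L), (b : ZMod L)) (-1),
      hσ, hS]
    ring
  · intro n hn1 hn2 hn3
    obtain ⟨_, _, _, M3, _⟩ := master ℓ₁ ℓ₂ b h2a h2b hLa hLb hb n
    obtain ⟨hσ, hS⟩ := M3 ⟨hn1, hn2, hn3⟩
    rw [flip_factored L hL h (protConf L ℓ₁ ℓ₂ b) n 0, hσ, hS]
    ring
  · intro x v hv hne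
    obtain ⟨Mval, M1, M2, M3, M4⟩ := master ℓ₁ ℓ₂ b h2a h2b hLa hLb hb x
    rw [← sub_neg, flip_factored L hL h (protConf L ℓ₁ ℓ₂ b) x v]
    rcases Mval with ha | ha
    · -- x is a zero
      rcases hv with rfl | rfl | rfl
      · -- v = -1
        by_cases hxq : x = ((ℓ₁ : ZMod L), (b : ZMod L))
        · obtain ⟨_, hS⟩ := M1 hxq
          rw [ha, hS]
          constructor
          · intro _; exact Or.inl ⟨hxq, rfl⟩
          · intro _; nlinarith
        · obtain ⟨hSlo, _⟩ := M2 ha hxq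
          rw [ha]
          constructor
          · intro hlt; exfalso; nlinarith
          · rintro (⟨h', _⟩ | ⟨h', _⟩)
            · exact absurd h' hxq
            · norm_num at h'
      · exact absurd ha.symm hne
      · -- v = 1
        have hShi : nbrSum L (protConf L ℓ₁ ℓ₂ b) x ≤ 0 := by
          by_cases hxq : x = ((ℓ₁ : ZMod L), (b : ZMod L))
          · rw [(M1 hxq).2]; norm_num
          · exact (M2 ha hxq).2
        rw [ha]
        constructor
        · intro hlt; exfalso; nlinarith
        · rintro (⟨_, h'⟩ | ⟨h', _⟩) <;> norm_num at h'
    · -- x is a minus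
      rcases hv with rfl | rfl | rfl
      · exact absurd ha.symm hne
      · -- v = 0
        by_cases hEx : (x.1 = (ℓ₁ : ZMod L)
            ∧ (x.2 = (b : ZMod L) + 1 ∨ x.2 = (b : ZMod L) - 1) ∧ x.2.val < ℓ₂)
        · obtain ⟨_, hS⟩ := M3 hEx
          rw [ha, hS]
          constructor
          · intro _; exact Or.inr ⟨rfl, hEx.1, hEx.2.1, hEx.2.2⟩
          · intro _; nlinarith
        · have hS := M4 ha hEx
          rw [ha]
          constructor
          · intro hlt; exfalso; nlinarith
          · rintro (⟨_, h'⟩ | ⟨_, hr1, hr2, hr3⟩)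
            · norm_num at h'
            · exact absurd ⟨hr1, hr2, hr3⟩ hEx
      · -- v = 1
        have hShi : nbrSum L (protConf L ℓ₁ ℓ₂ b) x ≤ -2 := by
          by_cases hEx : (x.1 = (ℓ₁ : ZMod L)
              ∧ (x.2 = (b : ZMod L) + 1 ∨ x.2 = (b : ZMod L) - 1) ∧ x.2.val < ℓ₂)
          · rw [(M3 hEx).2]
          · linarith [M4 ha hEx]
        rw [ha]
        constructor
        · intro hlt; exfalso; nlinarith
        · rintro (⟨_, h'⟩ | ⟨h', _⟩) <;> norm_num at h'
end
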